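/- arXiv:2109.10889 — 11 statements merged into one kernel-verified Lean document; each statement's English description precedes it below -/
import Mathlib

section
/- Let H = (V, E) be a hypergraph with a finite relation R_F over each hyperedge F ∈ E, let V_b be a proper subset of V (the bound variables), let u be a fractional edge cover of V, and let α = min_{x ∈ V \ V_b} Σ_{F ∈ E, x ∈ F} u_F be its slack. Then for every real T > 0, the set of tuples a over V_b satisfying ∏_{F ∈ E} |R_F(a)|^{u_F/α} > T is finite and has cardinality at most (∏_{F ∈ E} |R_F|^{u_F}) / T^α. -/
/-!
Each tuple `a` in the set contributes more than `T ^ α` to `∑_a ∏_F |R_F(a)| ^ u_F`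
(raise `T < ∏_F |R_F(a)| ^ (u_F / α)` to the power `α ≥ 1`), so it suffices to bound that sum
by `∏_F |R_F| ^ u_F`. This is done by freeing the bound variables one at a time: group the
tuples over `B ∪ {x₀}` by their restriction `a'` to `B`. For `x₀ ∉ F` the set `R_F(a)` is
`R_F(a')`, while for `x₀ ∈ F` the sets `R_F(a)` in a group are disjoint subsets of `R_F(a')`.
The weights `u_F` of the hyperedges through `x₀` sum to at least one, so Hölder's inequality
bounds the contribution of the group by `∏_F |R_F(a')| ^ u_F`.

Finiteness holds because every bound variable lies in a hyperedge of positive weight, and there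
`a` must extend a tuple of the finite relation.
-/

open Finset

namespace Real

variable {ι κ : Type*}

theorem sum_rpow_le_rpow_sum (s : Finset ι) {f : ι → ℝ} (hf : ∀ i ∈ s, 0 ≤ f i)
    {p : ℝ} (hp : 1 ≤ p) : ∑ i ∈ s, f i ^ p ≤ (∑ i ∈ s, f i) ^ p := by
  induction s using Finset.cons_induction with
  | empty => simp [zero_rpow (by positivity : p ≠ 0)]
  | cons a s _ ih =>
    simp only [forall_mem_cons] at hf
    rw [sum_cons, sum_cons]
    calc f a ^ p + ∑ i ∈ s, f i ^ p ≤ f a ^ p + (∑ i ∈ s, f i) ^ p := by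
          gcongr; exact ih hf.2
      _ ≤ (f a + ∑ i ∈ s, f i) ^ p := add_rpow_le_rpow_add hf.1 (sum_nonneg hf.2) hp

theorem sum_prod_rpow_le_prod_rpow_sum (s : Finset ι) (t : Finset κ) {w : κ → ℝ}
    (hw : ∀ k ∈ t, 0 ≤ w k) (hw1 : ∑ k ∈ t, w k = 1) {f : κ → ι → ℝ}
    (hf : ∀ k ∈ t, ∀ i ∈ s, 0 ≤ f k i) :
    ∑ i ∈ s, ∏ k ∈ t, f k i ^ w k ≤ ∏ k ∈ t, (∑ i ∈ s, f k i) ^ w k := by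
  set N : κ → ℝ := fun k ↦ ∑ i ∈ s, f k i
  have hN : ∀ k ∈ t, 0 ≤ N k := fun k hk ↦ sum_nonneg (hf k hk)
  by_cases! hzero : ∃ k ∈ t, w k ≠ 0 ∧ N k = 0
  · obtain ⟨k, hk, hwk, hNk⟩ := hzero
    have hfk : ∀ i ∈ s, f k i = 0 := (sum_eq_zero_iff_of_nonneg (hf k hk)).1 hNk
    calc ∑ i ∈ s, ∏ k ∈ t, f k i ^ w k
        = 0 := sum_eq_zero fun i hi ↦ prod_eq_zero hk (by rw [hfk i hi, zero_rpow hwk])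
      _ ≤ _ := prod_nonneg fun k hk ↦ rpow_nonneg (hN k hk) _
  have hwN : ∀ k ∈ t, w k * (N k / N k) = w k := fun k hk ↦ by
    by_cases hwk : w k = 0
    · rw [hwk, zero_mul]
    · rw [div_self (hzero k hk hwk), mul_one]
  have hP : 0 < ∏ k ∈ t, N k ^ w k := prod_pos fun k hk ↦ by
    by_cases hwk : w k = 0
    · rw [hwk, rpow_zero]; exact one_pos
    · exact rpow_pos_of_pos ((hN k hk).lt_of_ne' (hzero k hk hwk)) _
  -- weighted AM-GM applied, for each `i`, to the normalized values `f k i / N k`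
  rw [← div_le_one hP, sum_div]
  calc ∑ i ∈ s, (∏ k ∈ t, f k i ^ w k) / ∏ k ∈ t, N k ^ w k
      = ∑ i ∈ s, ∏ k ∈ t, (f k i / N k) ^ w k := sum_congr rfl fun i hi ↦ by
        rw [← prod_div_distrib]
        exact prod_congr rfl fun k hk ↦ (div_rpow (hf k hk i hi) (hN k hk) _).symm
    _ ≤ ∑ i ∈ s, ∑ k ∈ t, w k * (f k i / N k) := sum_le_sum fun i hi ↦
        geom_mean_le_arith_mean_weighted t w _ hw hw1
          fun k hk ↦ div_nonneg (hf k hk i hi) (hN k hk)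
    _ = ∑ k ∈ t, w k * (N k / N k) := by
        rw [sum_comm]
        exact sum_congr rfl fun k _ ↦ by rw [← mul_sum, ← sum_div]
    _ = 1 := by rw [sum_congr rfl hwN, hw1]

theorem sum_prod_rpow_le_prod_rpow_sum_of_one_le_sum (s : Finset ι) (t : Finset κ)
    {w : κ → ℝ} (hw : ∀ k ∈ t, 0 ≤ w k) (hw1 : 1 ≤ ∑ k ∈ t, w k)
    {f : κ → ι → ℝ}
    (hf : ∀ k ∈ t, ∀ i ∈ s, 0 ≤ f k i) :
    ∑ i ∈ s, ∏ k ∈ t, f k i ^ w k ≤ ∏ k ∈ t, (∑ i ∈ s, f k i) ^ w k := by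
  set σ := ∑ k ∈ t, w k
  have hσ : 0 < σ := one_pos.trans_le hw1
  have hsplit : ∀ {x : ℝ}, 0 ≤ x → ∀ k, x ^ w k = (x ^ σ) ^ (w k / σ) := fun hx k ↦ by
    rw [← rpow_mul hx, mul_div_cancel₀ _ hσ.ne']
  calc ∑ i ∈ s, ∏ k ∈ t, f k i ^ w k
      = ∑ i ∈ s, ∏ k ∈ t, (f k i ^ σ) ^ (w k / σ) :=
        sum_congr rfl fun i hi ↦ prod_congr rfl fun k hk ↦ hsplit (hf k hk i hi) k
    _ ≤ ∏ k ∈ t, (∑ i ∈ s, f k i ^ σ) ^ (w k / σ) :=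
        sum_prod_rpow_le_prod_rpow_sum s t (fun k hk ↦ div_nonneg (hw k hk) hσ.le)
          (by rw [← sum_div, div_self hσ.ne'])
          fun k hk i hi ↦ rpow_nonneg (hf k hk i hi) _
    _ ≤ ∏ k ∈ t, ((∑ i ∈ s, f k i) ^ σ) ^ (w k / σ) := by
        refine prod_le_prod (fun k hk ↦ rpow_nonneg ?_ _) fun k hk ↦
          rpow_le_rpow ?_ (sum_rpow_le_rpow_sum s (hf k hk) hw1) (div_nonneg (hw k hk) hσ.le)
        all_goals exact sum_nonneg fun i hi ↦ rpow_nonneg (hf k hk i hi) _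
    _ = ∏ k ∈ t, (∑ i ∈ s, f k i) ^ w k :=
        prod_congr rfl fun k hk ↦ (hsplit (sum_nonneg (hf k hk)) k).symm

theorem rpow_le_prod_rpow_of_lt_prod_rpow_div {t : Finset κ} {n w : κ → ℝ} {T c : ℝ}
    (hT : 0 ≤ T) (hc : 0 < c) (hn : ∀ k ∈ t, 0 ≤ n k)
    (h : T ≤ ∏ k ∈ t, n k ^ (w k / c)) :
    T ^ c ≤ ∏ k ∈ t, n k ^ w k := by
  refine (rpow_le_rpow hT h hc.le).trans_eq ?_
  rw [← finsetProd_rpow _ _ fun k hk ↦ rpow_nonneg (hn k hk) _]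
  exact prod_congr rfl fun k hk ↦ by rw [← rpow_mul (hn k hk), div_mul_cancel₀ _ hc.ne']

end Real

theorem Finset.sum_ncard_le_ncard_of_pairwiseDisjoint {ι α : Type*} {t : Finset ι}
    {s : ι → Set α} {S : Set α} (hS : S.Finite) (hsub : ∀ i ∈ t, s i ⊆ S)
    (hdisj : (t : Set ι).PairwiseDisjoint s) : ∑ i ∈ t, (s i).ncard ≤ S.ncard := by
  rw [← finsum_mem_coe_finset, ← t.finite_toSet.ncard_biUnion
    (fun i hi ↦ hS.subset (hsub i hi)) hdisj]
  exact Set.ncard_le_ncard (Set.iUnion₂_subset hsub) hS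

theorem exists_mem_pos_of_one_le_sum_ite {V : Type*} [DecidableEq V] {E : Finset (Finset V)}
    {u : Finset V → ℝ} {x : V}
    (hx : 1 ≤ ∑ F ∈ E, if x ∈ F then u F else 0) : ∃ F ∈ E, x ∈ F ∧ 0 < u F := by
  obtain ⟨F, hF, hpos⟩ := exists_lt_of_sum_lt ((sum_const_zero).trans_lt (one_pos.trans_le hx))
  split_ifs at hpos with hxF
  · exact ⟨F, hF, hxF, hpos⟩
  · exact absurd hpos (lt_irrefl 0)

section Agreeing

variable {V : Type*} {D : V → Type*} {F B B' : Finset V}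

/-- `agreeing (R F) a` is the set `R_F(a)`. -/
def agreeing (S : Set ((x : F) → D x.1)) (a : (x : B) → D x.1) : Set ((x : F) → D x.1) :=
  {s ∈ S | ∀ (x : V) (hF : x ∈ F) (hb : x ∈ B), s ⟨x, hF⟩ = a ⟨x, hb⟩}

variable {S : Set ((x : F) → D x.1)}

theorem agreeing_subset (a : (x : B) → D x.1) : agreeing S a ⊆ S := fun _ hs ↦ hs.1

theorem agreeing_empty (a : (x : (∅ : Finset V)) → D x.1) : agreeing S a = S :=
  Set.sep_eq_self_iff_mem_true.2 fun _ _ _ _ hb ↦ absurd hb (notMem_empty _)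

theorem agreeing_subset_agreeing_restrict₂ (h : B' ⊆ B) (a : (x : B) → D x.1) :
    agreeing S a ⊆ agreeing S (restrict₂ h a) :=
  fun _ hs ↦ ⟨hs.1, fun x hF hb ↦ hs.2 x hF (h hb)⟩

theorem agreeing_restrict₂_insert_of_notMem [DecidableEq V] {x₀ : V} (hx₀ : x₀ ∉ F)
    (a : (x : (insert x₀ B' : Finset V)) → D x.1) :
    agreeing S (restrict₂ (subset_insert x₀ B') a) = agreeing S a := by
  refine (Set.Subset.antisymm ?_ (agreeing_subset_agreeing_restrict₂ _ a))
  refine fun s hs ↦ ⟨hs.1, fun x hF hb ↦ hs.2 x hF ?_⟩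
  exact (mem_insert.1 hb).resolve_left (by rintro rfl; exact hx₀ hF)

theorem disjoint_agreeing {x₀ : V} (hF : x₀ ∈ F) (hB : x₀ ∈ B) {a c : (x : B) → D x.1}
    (h : a ⟨x₀, hB⟩ ≠ c ⟨x₀, hB⟩) : Disjoint (agreeing S a) (agreeing S c) :=
  Set.disjoint_left.2 fun _ hsa hsc ↦ h ((hsa.2 x₀ hF hB).symm.trans (hsc.2 x₀ hF hB))

theorem sum_ncard_agreeing_le [DecidableEq V] (hS : S.Finite) {x₀ : V} (hx₀ : x₀ ∈ F)
    {a' : (x : B') → D x.1} {Φ : Finset ((x : (insert x₀ B' : Finset V)) → D x.1)}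
    (hΦ : ∀ a ∈ Φ, restrict₂ (subset_insert x₀ B') a = a') :
    ∑ a ∈ Φ, (agreeing S a).ncard ≤ (agreeing S a').ncard := by
  refine sum_ncard_le_ncard_of_pairwiseDisjoint (hS.subset (agreeing_subset a'))
    (fun a ha ↦ hΦ a ha ▸ agreeing_subset_agreeing_restrict₂ _ a) fun a ha c hc hac ↦ ?_
  refine disjoint_agreeing hx₀ (mem_insert_self x₀ B') fun h ↦
    hac (funext fun ⟨x, hx⟩ ↦ ?_)
  rcases mem_insert.1 hx with rfl | hx
  · exact h
  · exact congrFun ((hΦ a ha).trans (hΦ c hc).symm) ⟨x, hx⟩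

variable {E : Finset (Finset V)} {R : (F : Finset V) → Set ((x : F) → D x.1)}

theorem finite_setOf_forall_agreeing_nonempty (hR : ∀ F ∈ E, (R F).Finite)
    (hB : ∀ x ∈ B, ∃ F ∈ E, x ∈ F) :
    {a : (x : B) → D x.1 | ∀ F ∈ E, (agreeing (R F) a).Nonempty}.Finite := by
  choose F hFE hxF using hB
  let proj (x : B) : Set (D x.1) := (fun s ↦ s ⟨x, hxF x x.2⟩) '' R (F x x.2)
  refine (Set.Finite.pi (t := proj) fun x ↦ (hR _ (hFE x x.2)).image _).subset fun a ha ↦ ?_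
  refine Set.mem_univ_pi.2 fun x ↦ ?_
  obtain ⟨s, hs, hsa⟩ := ha _ (hFE x x.2)
  exact ⟨s, hs, hsa x (hxF x x.2) x.2⟩

theorem finite_setOf_lt_prod_ncard_agreeing_rpow (hR : ∀ F ∈ E, (R F).Finite)
    {w : Finset V → ℝ} (hB : ∀ x ∈ B, ∃ F ∈ E, x ∈ F ∧ 0 < w F) {T : ℝ}
    (hT : 0 ≤ T) :
    {a : (x : B) → D x.1 | T < ∏ F ∈ E, ((agreeing (R F) a).ncard : ℝ) ^ w F}.Finite := by
  refine (finite_setOf_forall_agreeing_nonempty (E := E.filter (0 < w ·))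
    (fun F hF ↦ hR F (filter_subset _ _ hF)) fun x hx ↦ ?_).subset fun a ha F hF ↦ ?_
  · obtain ⟨F, hF, hxF, hpos⟩ := hB x hx
    exact ⟨F, mem_filter.2 ⟨hF, hpos⟩, hxF⟩
  · refine Set.nonempty_iff_ne_empty.2 fun hempty ↦
      (hT.trans_lt ha).ne' (prod_eq_zero (filter_subset _ _ hF) ?_)
    rw [hempty, Set.ncard_empty, Nat.cast_zero, Real.zero_rpow (mem_filter.1 hF).2.ne']

variable [DecidableEq V] {u : Finset V → ℝ}

theorem sum_fiber_prod_ncard_agreeing_rpow_le (hR : ∀ F ∈ E, (R F).Finite)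
    (hu : ∀ F ∈ E, 0 ≤ u F) {x₀ : V}
    (hx₀ : 1 ≤ ∑ F ∈ E, if x₀ ∈ F then u F else 0)
    {a' : (x : B') → D x.1} {Φ : Finset ((x : (insert x₀ B' : Finset V)) → D x.1)}
    (hΦ : ∀ a ∈ Φ, restrict₂ (subset_insert x₀ B') a = a') :
    ∑ a ∈ Φ, ∏ F ∈ E, ((agreeing (R F) a).ncard : ℝ) ^ u F ≤
      ∏ F ∈ E, ((agreeing (R F) a').ncard : ℝ) ^ u F := by
  have hout : ∀ a ∈ Φ, ∀ F ∈ E.filter (x₀ ∉ ·),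
      (agreeing (R F) a).ncard = (agreeing (R F) a').ncard := fun a ha F hF ↦ by
    rw [← hΦ a ha, agreeing_restrict₂_insert_of_notMem (mem_filter.1 hF).2]
  calc ∑ a ∈ Φ, ∏ F ∈ E, ((agreeing (R F) a).ncard : ℝ) ^ u F
      = (∑ a ∈ Φ, ∏ F ∈ E.filter (x₀ ∈ ·), ((agreeing (R F) a).ncard : ℝ) ^ u F) *
          ∏ F ∈ E.filter (x₀ ∉ ·), ((agreeing (R F) a').ncard : ℝ) ^ u F := by
        rw [sum_mul]
        refine sum_congr rfl fun a ha ↦ ?_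
        rw [← prod_filter_mul_prod_filter_not E (x₀ ∈ ·)]
        exact congrArg _ (prod_congr rfl fun F hF ↦ by rw [hout a ha F hF])
    _ ≤ (∏ F ∈ E.filter (x₀ ∈ ·),
            (∑ a ∈ Φ, ((agreeing (R F) a).ncard : ℝ)) ^ u F) *
          ∏ F ∈ E.filter (x₀ ∉ ·), ((agreeing (R F) a').ncard : ℝ) ^ u F := by
        gcongr
        exact Real.sum_prod_rpow_le_prod_rpow_sum_of_one_le_sum Φ _
          (fun F hF ↦ hu F (mem_filter.1 hF).1) (by rwa [sum_filter])
          fun _ _ _ _ ↦ Nat.cast_nonneg _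
    _ ≤ (∏ F ∈ E.filter (x₀ ∈ ·), ((agreeing (R F) a').ncard : ℝ) ^ u F) *
          ∏ F ∈ E.filter (x₀ ∉ ·), ((agreeing (R F) a').ncard : ℝ) ^ u F := by
        gcongr with F hF
        · exact hu F (mem_filter.1 hF).1
        · exact_mod_cast
            sum_ncard_agreeing_le (hR F (mem_filter.1 hF).1) (mem_filter.1 hF).2 hΦ
    _ = ∏ F ∈ E, ((agreeing (R F) a').ncard : ℝ) ^ u F :=
        prod_filter_mul_prod_filter_not E _ _

theorem sum_prod_ncard_agreeing_rpow_le (hR : ∀ F ∈ E, (R F).Finite)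
    (hu : ∀ F ∈ E, 0 ≤ u F)
    (B : Finset V) (hB : ∀ x ∈ B, 1 ≤ ∑ F ∈ E, if x ∈ F then u F else 0)
    (A : Finset ((x : B) → D x.1)) :
    ∑ a ∈ A, ∏ F ∈ E, ((agreeing (R F) a).ncard : ℝ) ^ u F ≤
      ∏ F ∈ E, ((R F).ncard : ℝ) ^ u F := by
  classical
  induction B using Finset.induction_on with
  | empty =>
    simp only [agreeing_empty, sum_const, nsmul_eq_mul]
    refine mul_le_of_le_one_left (prod_nonneg fun _ _ ↦ by positivity) ?_
    exact_mod_cast card_le_one_of_subsingleton A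
  | insert x₀ B' _ ih =>
    set π := restrict₂ (π := fun x ↦ D x) (subset_insert x₀ B')
    calc ∑ a ∈ A, ∏ F ∈ E, ((agreeing (R F) a).ncard : ℝ) ^ u F
        = ∑ a' ∈ A.image π, ∑ a ∈ A with π a = a',
            ∏ F ∈ E, ((agreeing (R F) a).ncard : ℝ) ^ u F :=
          (sum_fiberwise_of_maps_to (fun a ha ↦ mem_image_of_mem π ha) _).symm
      _ ≤ ∑ a' ∈ A.image π, ∏ F ∈ E, ((agreeing (R F) a').ncard : ℝ) ^ u F :=
          sum_le_sum fun a' _ ↦ sum_fiber_prod_ncard_agreeing_rpow_le hR hu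
            (hB x₀ (mem_insert_self x₀ B')) fun a ha ↦ (mem_filter.1 ha).2
      _ ≤ ∏ F ∈ E, ((R F).ncard : ℝ) ^ u F :=
          ih (fun x hx ↦ hB x (mem_insert_of_mem hx)) _

end Agreeing

theorem stmt0_general {V : Type*} [DecidableEq V]
    (D : V → Type*)
    (E : Finset (Finset V))
    (R : (F : Finset V) → Set ((x : F) → D x.1))
    (hRfin : ∀ F ∈ E, (R F).Finite)
    (Vb : Finset V)
    (u : Finset V → ℝ)
    (hu0 : ∀ F ∈ E, 0 ≤ u F)
    (hucov : ∀ x : V, 1 ≤ ∑ F ∈ E, if x ∈ F then u F else 0)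
    (α : ℝ)
    (hα : IsLeast {s : ℝ | ∃ x : V, x ∉ Vb ∧ s = ∑ F ∈ E, if x ∈ F then u F else 0} α)
    (T : ℝ) (hT : 0 < T) :
    {a : (x : Vb) → D x.1 |
        T < ∏ F ∈ E,
          (({s ∈ R F | ∀ (x : V) (hF : x ∈ F) (hb : x ∈ Vb),
              s ⟨x, hF⟩ = a ⟨x, hb⟩}).ncard : ℝ) ^ (u F / α)}.Finite ∧
    (({a : (x : Vb) → D x.1 |
        T < ∏ F ∈ E,
          (({s ∈ R F | ∀ (x : V) (hF : x ∈ F) (hb : x ∈ Vb),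
              s ⟨x, hF⟩ = a ⟨x, hb⟩}).ncard : ℝ) ^ (u F / α)}).ncard : ℝ)
      ≤ (∏ F ∈ E, ((R F).ncard : ℝ) ^ (u F)) / T ^ α := by
  obtain ⟨⟨x₁, -, hαx₁⟩, -⟩ := hα
  have hα : 0 < α := one_pos.trans_le (hαx₁ ▸ hucov x₁)
  set A := {a : (x : Vb) → D x.1 |
    T < ∏ F ∈ E, ((agreeing (R F) a).ncard : ℝ) ^ (u F / α)}
  change A.Finite ∧ (A.ncard : ℝ) ≤ (∏ F ∈ E, ((R F).ncard : ℝ) ^ u F) / T ^ α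
  have hfin : A.Finite := finite_setOf_lt_prod_ncard_agreeing_rpow hRfin (fun x _ ↦
    let ⟨F, hF, hxF, hpos⟩ := exists_mem_pos_of_one_le_sum_ite (hucov x)
    ⟨F, hF, hxF, div_pos hpos hα⟩) hT.le
  refine ⟨hfin, ?_⟩
  rw [le_div_iff₀ (by positivity), Set.ncard_eq_toFinset_card _ hfin]
  calc (hfin.toFinset.card : ℝ) * T ^ α = ∑ _a ∈ hfin.toFinset, T ^ α := by
        rw [sum_const, nsmul_eq_mul]
    _ ≤ ∑ a ∈ hfin.toFinset, ∏ F ∈ E, ((agreeing (R F) a).ncard : ℝ) ^ u F :=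
        sum_le_sum fun a ha ↦ Real.rpow_le_prod_rpow_of_lt_prod_rpow_div hT.le hα
          (fun _ _ ↦ Nat.cast_nonneg _) (hfin.mem_toFinset.1 ha).le
    _ ≤ ∏ F ∈ E, ((R F).ncard : ℝ) ^ u F :=
        sum_prod_ncard_agreeing_rpow_le hRfin hu0 Vb (fun x _ ↦ hucov x) _

/-- Let `H = (V, E)` be a hypergraph (every variable lies in some hyperedge)
with a finite relation `R F` over each hyperedge `F ∈ E`, let `Vb` be a proper subset of `V`
(the bound variables), let `u` be a fractional edge cover of `V`, and let
`α = min_{x ∈ V \ Vb} Σ_{F ∈ E, x ∈ F} u F` be its slack.  Then for every real `T > 0`,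
the set of tuples `a` over `Vb` satisfying `∏_{F ∈ E} |R_F(a)| ^ (u F / α) > T` is finite
and has cardinality at most `(∏_{F ∈ E} |R F| ^ (u F)) / T ^ α`. -/
theorem stmt0 {V : Type*} [Fintype V] [DecidableEq V]
    (D : V → Type*)
    (E : Finset (Finset V))
    (hcover : ∀ x : V, ∃ F ∈ E, x ∈ F)
    (R : (F : Finset V) → Set ((x : F) → D x.1))
    (hRfin : ∀ F ∈ E, (R F).Finite)
    (Vb : Finset V) (hVb : Vb ≠ Finset.univ)
    (u : Finset V → ℝ)
    (hu0 : ∀ F ∈ E, 0 ≤ u F)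
    (hucov : ∀ x : V, 1 ≤ ∑ F ∈ E, if x ∈ F then u F else 0)
    (α : ℝ)
    (hα : IsLeast {s : ℝ | ∃ x : V, x ∉ Vb ∧ s = ∑ F ∈ E, if x ∈ F then u F else 0} α)
    (T : ℝ) (hT : 0 < T) :
    {a : (x : Vb) → D x.1 |
        T < ∏ F ∈ E,
          (({s ∈ R F | ∀ (x : V) (hF : x ∈ F) (hb : x ∈ Vb),
              s ⟨x, hF⟩ = a ⟨x, hb⟩}).ncard : ℝ) ^ (u F / α)}.Finite ∧
    (({a : (x : Vb) → D x.1 |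
        T < ∏ F ∈ E,
          (({s ∈ R F | ∀ (x : V) (hF : x ∈ F) (hb : x ∈ Vb),
              s ⟨x, hF⟩ = a ⟨x, hb⟩}).ncard : ℝ) ^ (u F / α)}).ncard : ℝ)
      ≤ (∏ F ∈ E, ((R F).ncard : ℝ) ^ (u F)) / T ^ α :=
  stmt0_general D E R hRfin Vb u hu0 hucov α hα T hT
end

section
/- Let H = (V, E) be a hypergraph with a finite relation R_F over each hyperedge F ∈ E, let V_b be a proper subset of V, let u be a fractional edge cover of V, and let α be its slack. Then for every real T > 0, the set of tuples a over V_b such that the number of tuples t in the join ⋈_{F∈E} R_F with t[V_b] = a exceeds T is finite and has cardinality at most (∏_{F ∈ E} |R_F|^{u_F}) / T^α. -/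
/-!
For a tuple `a` over the bound variables, the join tuples extending `a` form the join of the
residual relations on the free variables, which `u / α` covers fractionally. Finner's inequality
(the AGM bound) gives `N(a) ^ α ≤ ∏_F deg_F(a) ^ u_F`, where `deg_F(a)` counts the tuples of
`R_F` agreeing with `a` on `F ∩ V_b`. Since `u` covers `V_b`, Finner's inequality applied once
more bounds `∑_a ∏_F deg_F(a) ^ u_F` by `∏_F |R_F| ^ u_F`, and Markov's inequality turns
`∑_a N(a) ^ α ≤ ∏_F |R_F| ^ u_F` into the bound on the number of `a` with `N(a) > T`.
Finner's inequality itself follows by summing out one variable at a time, each step being the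
generalized Hölder inequality for weights of total mass at least `1`.
-/

open Finset Real Function

lemma prod_rpow_le_sum_div_mul {ι : Type*} (s : Finset ι) {w z : ι → ℝ}
    (hw : ∀ i ∈ s, 0 ≤ w i) (hw1 : 1 ≤ ∑ i ∈ s, w i)
    (hz0 : ∀ i ∈ s, 0 ≤ z i) (hz1 : ∀ i ∈ s, z i ≤ 1) :
    ∏ i ∈ s, z i ^ w i ≤ ∑ i ∈ s, w i / (∑ j ∈ s, w j) * z i := by
  set W := ∑ j ∈ s, w j
  have hW : 0 < W := one_pos.trans_le hw1
  calc ∏ i ∈ s, z i ^ w i ≤ ∏ i ∈ s, z i ^ (w i / W) := by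
        refine prod_le_prod (fun i hi => rpow_nonneg (hz0 i hi) _) fun i hi => ?_
        exact rpow_le_rpow_of_exponent_ge' (hz0 i hi) (hz1 i hi)
          (div_nonneg (hw i hi) hW.le) (div_le_self (hw i hi) hw1)
    _ ≤ ∑ i ∈ s, w i / W * z i :=
        geom_mean_le_arith_mean_weighted s _ _ (fun i hi => div_nonneg (hw i hi) hW.le)
          (by rw [← sum_div, div_self hW.ne']) hz0

theorem sum_prod_rpow_le_prod_sum_rpow {ι β : Type*} (s : Finset ι) (t : Finset β)
    {w : ι → ℝ} (hw : ∀ i ∈ s, 0 ≤ w i) (hw1 : 1 ≤ ∑ i ∈ s, w i)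
    {g : ι → β → ℝ} (hg : ∀ i ∈ s, ∀ b ∈ t, 0 ≤ g i b) :
    ∑ b ∈ t, ∏ i ∈ s, g i b ^ w i ≤ ∏ i ∈ s, (∑ b ∈ t, g i b) ^ w i := by
  set G : ι → ℝ := fun i => ∑ b ∈ t, g i b
  have hG : ∀ i ∈ s, 0 ≤ G i := fun i hi => sum_nonneg (hg i hi)
  -- normalising by `G i` is harmless even when `G i = 0`, since then `g i = 0` on `t`
  have hsplit : ∀ b ∈ t, ∏ i ∈ s, g i b ^ w i
      = (∏ i ∈ s, (g i b / G i) ^ w i) * ∏ i ∈ s, G i ^ w i := by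
    intro b hb
    rw [← prod_mul_distrib]
    refine prod_congr rfl fun i hi => ?_
    rw [← mul_rpow (div_nonneg (hg i hi b hb) (hG i hi)) (hG i hi), div_mul_cancel_of_imp]
    intro h0
    exact (sum_eq_zero_iff_of_nonneg (hg i hi)).1 h0 b hb
  have hnorm : ∑ b ∈ t, ∏ i ∈ s, (g i b / G i) ^ w i ≤ 1 := by
    calc ∑ b ∈ t, ∏ i ∈ s, (g i b / G i) ^ w i
        ≤ ∑ b ∈ t, ∑ i ∈ s, w i / (∑ j ∈ s, w j) * (g i b / G i) :=
          sum_le_sum fun b hb => prod_rpow_le_sum_div_mul s hw hw1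
            (fun i hi => div_nonneg (hg i hi b hb) (hG i hi))
            (fun i hi => div_le_one_of_le₀ (single_le_sum (hg i hi) hb) (hG i hi))
      _ = ∑ i ∈ s, w i / (∑ j ∈ s, w j) * (G i / G i) := by
          rw [sum_comm]
          simp only [← mul_sum, ← sum_div, G]
      _ ≤ ∑ i ∈ s, w i / (∑ j ∈ s, w j) := by
          refine sum_le_sum fun i hi => mul_le_of_le_one_right ?_ (div_self_le_one _)
          exact div_nonneg (hw i hi) (zero_le_one.trans hw1)
      _ = 1 := by rw [← sum_div, div_self (one_pos.trans_le hw1).ne']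
  calc ∑ b ∈ t, ∏ i ∈ s, g i b ^ w i
      = (∑ b ∈ t, ∏ i ∈ s, (g i b / G i) ^ w i) * ∏ i ∈ s, G i ^ w i := by
        rw [sum_mul]; exact sum_congr rfl hsplit
    _ ≤ ∏ i ∈ s, G i ^ w i :=
        mul_le_of_le_one_left (prod_nonneg fun i hi => rpow_nonneg (hG i hi) _) hnorm

lemma card_filter_lt_mul_rpow_le_sum_rpow {ι : Type*} (s : Finset ι) {f : ι → ℝ}
    (hf : ∀ i ∈ s, 0 ≤ f i) {T α : ℝ} (hT : 0 ≤ T) (hα : 0 ≤ α) :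
    #{i ∈ s | T < f i} * T ^ α ≤ ∑ i ∈ s, f i ^ α := by
  calc #{i ∈ s | T < f i} * T ^ α = ∑ i ∈ s with T < f i, T ^ α := by
        rw [sum_const, nsmul_eq_mul]
    _ ≤ ∑ i ∈ s with T < f i, f i ^ α :=
        sum_le_sum fun i hi => rpow_le_rpow hT (mem_filter.1 hi).2.le hα
    _ ≤ ∑ i ∈ s, f i ^ α :=
        sum_le_sum_of_subset_of_nonneg (filter_subset _ _) fun i hi _ => rpow_nonneg (hf i hi) _

section PinnedBox

variable {V : Type*} [Fintype V] [DecidableEq V] {D : V → Type*}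

/-- Finite sub-products are modelled inside the full product: the coordinates in `S` range over
`A`, the others are pinned to `t₀`. -/
def pinnedBox (A : ∀ x, Finset (D x)) (t₀ : ∀ x, D x) (S : Finset V) : Finset (∀ x, D x) :=
  Fintype.piFinset fun x => if x ∈ S then A x else {t₀ x}

variable {A : ∀ x, Finset (D x)} {t₀ t : ∀ x, D x} {S : Finset V}

lemma mem_pinnedBox :
    t ∈ pinnedBox A t₀ S ↔ (∀ x ∈ S, t x ∈ A x) ∧ ∀ x ∉ S, t x = t₀ x := by
  simp only [pinnedBox, Fintype.mem_piFinset]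
  refine ⟨fun h => ⟨fun x hx => ?_, fun x hx => ?_⟩, fun h x => ?_⟩
  · simpa [hx] using h x
  · simpa [hx] using h x
  · by_cases hx : x ∈ S <;> simp [hx, h.1, h.2]

lemma pinnedBox_empty : pinnedBox A t₀ ∅ = {t₀} := by
  simp [pinnedBox, Fintype.piFinset_singleton]

lemma sum_pinnedBox_insert {M : Type*} [AddCommMonoid M] {x : V} (hx : x ∉ S)
    (h : (∀ x, D x) → M) :
    ∑ t ∈ pinnedBox A t₀ (insert x S), h t
      = ∑ t ∈ pinnedBox A t₀ S, ∑ v ∈ A x, h (update t x v) := by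
  rw [← sum_product']
  refine sum_nbij' (fun t => (update t x (t₀ x), t x))
    (fun p => update p.1 x p.2) ?_ ?_ ?_ ?_ ?_
  · intro t ht
    simp only [mem_product, mem_pinnedBox, mem_insert] at ht ⊢
    grind
  · rintro ⟨s, v⟩ hp
    simp only [mem_product, mem_pinnedBox, mem_insert] at hp ⊢
    grind
  · intro t _
    simp
  · rintro ⟨s, v⟩ hp
    simp only [mem_product, mem_pinnedBox] at hp
    simp [← hp.1.2 x hx]
  · intro t _
    simp

end PinnedBox

section Finner

variable {V : Type*} [DecidableEq V] {D : V → Type*}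
  {E : Finset (Finset V)} {w : Finset V → ℝ} {g : Finset V → (∀ x, D x) → ℝ}

lemma sum_prod_update_rpow_le (hw : ∀ F ∈ E, 0 ≤ w F) (hg0 : ∀ F ∈ E, ∀ t, 0 ≤ g F t)
    (hg : ∀ F ∈ E, DependsOn (g F) F) (A : ∀ x, Finset (D x)) {x : V}
    (hx : 1 ≤ ∑ F ∈ E with x ∈ F, w F) (t : ∀ x, D x) :
    ∑ v ∈ A x, ∏ F ∈ E, g F (update t x v) ^ w F
      ≤ ∏ F ∈ E, (if x ∈ F then ∑ v ∈ A x, g F (update t x v) else g F t) ^ w F := by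
  have hfree : ∀ F ∈ E, x ∉ F → ∀ v, g F (update t x v) = g F t := fun F hF hxF v =>
    hg F hF fun y hy => update_of_ne (by rintro rfl; exact hxF hy) _ _
  calc ∑ v ∈ A x, ∏ F ∈ E, g F (update t x v) ^ w F
      = (∑ v ∈ A x, ∏ F ∈ E with x ∈ F, g F (update t x v) ^ w F)
          * ∏ F ∈ E with x ∉ F, g F t ^ w F := by
        rw [sum_mul]
        refine sum_congr rfl fun v _ => ?_
        rw [← prod_filter_mul_prod_filter_not E (x ∈ ·)]
        congr 1
        refine prod_congr rfl fun F hF => ?_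
        rw [mem_filter] at hF
        rw [hfree F hF.1 hF.2]
    _ ≤ (∏ F ∈ E with x ∈ F, (∑ v ∈ A x, g F (update t x v)) ^ w F)
          * ∏ F ∈ E with x ∉ F, g F t ^ w F := by
        refine mul_le_mul_of_nonneg_right ?_
          (prod_nonneg fun F hF => rpow_nonneg (hg0 F (mem_filter.1 hF).1 t) _)
        exact sum_prod_rpow_le_prod_sum_rpow _ _ (fun F hF => hw F (mem_filter.1 hF).1) hx
          fun F hF v _ => hg0 F (mem_filter.1 hF).1 _
    _ = ∏ F ∈ E, (if x ∈ F then ∑ v ∈ A x, g F (update t x v) else g F t) ^ w F := by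
        rw [← prod_filter_mul_prod_filter_not E (x ∈ ·)]
        congr 1 <;> refine prod_congr rfl fun F hF => ?_ <;> simp_all

theorem sum_pinnedBox_prod_rpow_le [Fintype V] (hw : ∀ F ∈ E, 0 ≤ w F)
    (hg0 : ∀ F ∈ E, ∀ t, 0 ≤ g F t) (hg : ∀ F ∈ E, DependsOn (g F) F)
    (A : ∀ x, Finset (D x)) (t₀ : ∀ x, D x) {S : Finset V}
    (hS : ∀ x ∈ S, 1 ≤ ∑ F ∈ E with x ∈ F, w F) :
    ∑ t ∈ pinnedBox A t₀ S, ∏ F ∈ E, g F t ^ w F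
      ≤ ∏ F ∈ E, (∑ s ∈ pinnedBox A t₀ (S ∩ F), g F s) ^ w F := by
  induction S using Finset.induction_on generalizing g with
  | empty => simp [pinnedBox_empty]
  | insert x S hxS ih =>
    set g' : Finset V → (∀ x, D x) → ℝ := fun F t =>
      if x ∈ F then ∑ v ∈ A x, g F (update t x v) else g F t
    have hg'0 : ∀ F ∈ E, ∀ t, 0 ≤ g' F t := fun F hF t => by
      unfold g'
      split_ifs
      exacts [sum_nonneg fun v _ => hg0 F hF _, hg0 F hF t]
    have hg' : ∀ F ∈ E, DependsOn (g' F) F := fun F hF t t' htt' => by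
      unfold g'
      split_ifs with hxF
      · refine sum_congr rfl fun v _ => hg F hF fun y hy => ?_
        rcases eq_or_ne y x with rfl | hyx
        · simp
        · simp only [update_of_ne hyx, htt' y hy]
      · exact hg F hF htt'
    have hmarg : ∀ F ∈ E, ∑ s ∈ pinnedBox A t₀ (S ∩ F), g' F s
        = ∑ s ∈ pinnedBox A t₀ (insert x S ∩ F), g F s := fun F hF => by
      by_cases hxF : x ∈ F
      · rw [insert_inter_of_mem hxF, sum_pinnedBox_insert (fun h => hxS (mem_inter.1 h).1)]
        simp [g', hxF]
      · simp [g', hxF, insert_inter_of_notMem hxF]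
    calc ∑ t ∈ pinnedBox A t₀ (insert x S), ∏ F ∈ E, g F t ^ w F
        = ∑ t ∈ pinnedBox A t₀ S, ∑ v ∈ A x, ∏ F ∈ E, g F (update t x v) ^ w F :=
          sum_pinnedBox_insert hxS _
      _ ≤ ∑ t ∈ pinnedBox A t₀ S, ∏ F ∈ E, g' F t ^ w F :=
          sum_le_sum fun t _ => sum_prod_update_rpow_le hw hg0 hg A (hS x (mem_insert_self x S)) t
      _ ≤ ∏ F ∈ E, (∑ s ∈ pinnedBox A t₀ (S ∩ F), g' F s) ^ w F :=
          ih hg'0 hg' fun y hy => hS y (mem_insert_of_mem hy)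
      _ = ∏ F ∈ E, (∑ s ∈ pinnedBox A t₀ (insert x S ∩ F), g F s) ^ w F :=
          prod_congr rfl fun F hF => by rw [hmarg F hF]

end Finner

section Join

open scoped Classical

variable {V : Type*} {D : V → Type*}

lemma exists_finset_forall_apply_mem (E : Finset (Finset V))
    (R : ∀ F : Finset V, Finset (∀ y : F, D y)) :
    ∃ A : ∀ x, Finset (D x), ∀ F ∈ E, ∀ q ∈ R F, ∀ y : F, q y ∈ A y :=
  ⟨fun x => E.biUnion fun F => if h : x ∈ F then (R F).image fun q => q ⟨x, h⟩ else ∅,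
    fun F hF q hq y => mem_biUnion.2 ⟨F, hF, by simpa [y.2] using ⟨q, hq, rfl⟩⟩⟩

lemma apply_mem_of_forall_restrict_mem {E : Finset (Finset V)}
    {R : ∀ F : Finset V, Finset (∀ y : F, D y)} {A : ∀ x, Finset (D x)}
    (hcover : ∀ x, ∃ F ∈ E, x ∈ F)
    (hRA : ∀ F ∈ E, ∀ q ∈ R F, ∀ y : F, q y ∈ A y)
    {t : ∀ x, D x} (ht : ∀ F ∈ E, F.restrict t ∈ R F) (x : V) : t x ∈ A x := by
  obtain ⟨F, hF, hx⟩ := hcover x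
  exact hRA F hF _ (ht F hF) ⟨x, hx⟩

variable [DecidableEq V] {A : ∀ x, Finset (D x)}

noncomputable def degree {F : Finset V} (r : Finset (∀ y : F, D y)) (S : Finset V)
    (τ : ∀ x, D x) : ℕ :=
  #{q ∈ r | ∀ y : F, y.1 ∈ S → q y = τ y}

lemma dependsOn_degree {F : Finset V} (r : Finset (∀ y : F, D y)) (S : Finset V) :
    DependsOn (degree r S) F := fun τ τ' h => by
  unfold degree
  congr 1
  exact filter_congr fun q _ => forall_congr' fun y => by rw [h y y.2]

lemma card_filter_pinnedBox_compl_inter [Fintype V] {F : Finset V} {r : Finset (∀ y : F, D y)}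
    (hr : ∀ q ∈ r, ∀ y : F, q y ∈ A y) (S : Finset V) (τ : ∀ x, D x) :
    #{s ∈ pinnedBox A τ (Sᶜ ∩ F) | F.restrict s ∈ r} = degree r S τ := by
  unfold degree
  refine card_nbij' F.restrict (fun q x => if h : x ∈ F then q ⟨x, h⟩ else τ x) ?_ ?_ ?_ ?_
  · intro s hs
    simp only [mem_coe, mem_filter, mem_pinnedBox, mem_inter, mem_compl] at hs ⊢
    exact ⟨hs.2, fun y hy => hs.1.2 y (by tauto)⟩
  · intro q hq
    simp only [mem_coe, mem_filter, mem_pinnedBox, mem_inter, mem_compl] at hq ⊢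
    refine ⟨⟨fun x hx => by simpa [hx.2] using hr q hq.1 ⟨x, hx.2⟩, fun x hx => ?_⟩, ?_⟩
    · by_cases hxF : x ∈ F
      · simpa [hxF] using hq.2 ⟨x, hxF⟩ (by tauto)
      · simp [hxF]
    · convert hq.1 using 1
      funext y
      simp [Finset.restrict]
  · intro s hs
    simp only [mem_coe, mem_filter, mem_pinnedBox, mem_inter, mem_compl] at hs
    funext x
    by_cases hx : x ∈ F
    · simp [hx]
    · simp [hx, hs.1.2 x (by tauto)]
  · intro q _
    funext y
    simp

lemma sum_degree_pinnedBox [Fintype V] {F : Finset V} {r : Finset (∀ y : F, D y)}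
    (hr : ∀ q ∈ r, ∀ y : F, q y ∈ A y) (S : Finset V) (t₀ : ∀ x, D x) :
    ∑ τ ∈ pinnedBox A t₀ (S ∩ F), degree r S τ = #r := by
  symm
  unfold degree
  rw [card_eq_sum_card_fiberwise (t := pinnedBox A t₀ (S ∩ F))
    (f := fun q x => if h : x ∈ S ∩ F then q ⟨x, (mem_inter.1 h).2⟩ else t₀ x)]
  · refine sum_congr rfl fun τ hτ => congrArg card (filter_congr fun q _ => ?_)
    rw [mem_pinnedBox] at hτ
    constructor
    · rintro rfl y hy
      simp [hy]
    · intro h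
      funext x
      by_cases hx : x ∈ S ∩ F
      · simp [hx, h ⟨x, (mem_inter.1 hx).2⟩ (mem_inter.1 hx).1]
      · simp [hx, hτ.2 x hx]
  · intro q hq
    rw [mem_coe, mem_pinnedBox]
    refine ⟨fun x hx => ?_, fun x hx => by simp [hx]⟩
    simpa [hx] using hr q (mem_coe.1 hq) ⟨x, (mem_inter.1 hx).2⟩

variable [Fintype V] {E : Finset (Finset V)} {R : ∀ F : Finset V, Finset (∀ y : F, D y)}

noncomputable def joinCount (E : Finset (Finset V)) (R : ∀ F : Finset V, Finset (∀ y : F, D y))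
    (A : ∀ x, Finset (D x)) (S : Finset V) (τ : ∀ x, D x) : ℕ :=
  #{t ∈ pinnedBox A τ S | ∀ F ∈ E, F.restrict t ∈ R F}

lemma ncard_setOf_restrict_eq_joinCount (hcover : ∀ x, ∃ F ∈ E, x ∈ F)
    (hRA : ∀ F ∈ E, ∀ q ∈ R F, ∀ y : F, q y ∈ A y) (Vb : Finset V) (τ : ∀ x, D x) :
    {t : ∀ x, D x | (∀ F ∈ E, F.restrict t ∈ R F) ∧ Vb.restrict t = Vb.restrict τ}.ncard
      = joinCount E R A Vbᶜ τ := by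
  rw [joinCount, ← Set.ncard_coe_finset]
  congr 1
  ext t
  simp only [Set.mem_ofPred_eq, coe_filter, mem_pinnedBox, mem_compl, not_not, funext_iff,
    Finset.restrict, Subtype.forall]
  constructor
  · rintro ⟨ht, hτ⟩
    exact ⟨⟨fun x _ => apply_mem_of_forall_restrict_mem hcover hRA ht x, hτ⟩, ht⟩
  · rintro ⟨⟨-, hτ⟩, ht⟩
    exact ⟨ht, hτ⟩

lemma joinCount_compl_le_prod_degree_rpow (hRA : ∀ F ∈ E, ∀ q ∈ R F, ∀ y : F, q y ∈ A y)
    {w : Finset V → ℝ} (hw : ∀ F ∈ E, 0 ≤ w F) {Vb : Finset V}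
    (hcov : ∀ x ∉ Vb, 1 ≤ ∑ F ∈ E with x ∈ F, w F) (τ : ∀ x, D x) :
    (joinCount E R A Vbᶜ τ : ℝ) ≤ ∏ F ∈ E, (degree (R F) Vb τ : ℝ) ^ w F := by
  set ind : Finset V → (∀ x, D x) → ℝ := fun F t => if F.restrict t ∈ R F then 1 else 0
  have hind0 : ∀ F ∈ E, ∀ t, 0 ≤ ind F t := fun F _ t => by
    unfold ind; split_ifs <;> norm_num
  calc (joinCount E R A Vbᶜ τ : ℝ) = ∑ t ∈ pinnedBox A τ Vbᶜ, ∏ F ∈ E, ind F t := by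
        rw [joinCount, card_filter, Nat.cast_sum]
        simp only [ind, prod_boole, Nat.cast_ite, Nat.cast_one, Nat.cast_zero]
        -- the two sides differ only in their decidability instances
        convert rfl
    _ ≤ ∑ t ∈ pinnedBox A τ Vbᶜ, ∏ F ∈ E, ind F t ^ w F := by
        refine sum_le_sum fun t _ => prod_le_prod (hind0 · · t) fun F _ => ?_
        unfold ind
        split_ifs
        exacts [(one_rpow _).ge, rpow_nonneg le_rfl _]
    _ ≤ ∏ F ∈ E, (∑ s ∈ pinnedBox A τ (Vbᶜ ∩ F), ind F s) ^ w F :=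
        sum_pinnedBox_prod_rpow_le hw hind0
          (fun F _ t t' h => by simp only [ind, dependsOn_restrict F h]) A τ
          fun x hx => hcov x (mem_compl.1 hx)
    _ = ∏ F ∈ E, (degree (R F) Vb τ : ℝ) ^ w F := prod_congr rfl fun F hF => by
        rw [← card_filter_pinnedBox_compl_inter (hRA F hF)]
        simp [ind]

lemma sum_joinCount_rpow_le (hRA : ∀ F ∈ E, ∀ q ∈ R F, ∀ y : F, q y ∈ A y)
    {u : Finset V → ℝ} (hu : ∀ F ∈ E, 0 ≤ u F) {Vb : Finset V}
    (hVb : ∀ x ∈ Vb, 1 ≤ ∑ F ∈ E with x ∈ F, u F) {α : ℝ} (hα : 0 < α)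
    (hαu : ∀ x ∉ Vb, α ≤ ∑ F ∈ E with x ∈ F, u F) (t₀ : ∀ x, D x) :
    ∑ τ ∈ pinnedBox A t₀ Vb, (joinCount E R A Vbᶜ τ : ℝ) ^ α
      ≤ ∏ F ∈ E, (#(R F) : ℝ) ^ u F := by
  have hdeg0 : ∀ F τ, 0 ≤ (degree (R F) Vb τ : ℝ) := fun _ _ => Nat.cast_nonneg _
  calc ∑ τ ∈ pinnedBox A t₀ Vb, (joinCount E R A Vbᶜ τ : ℝ) ^ α
      ≤ ∑ τ ∈ pinnedBox A t₀ Vb, ∏ F ∈ E, (degree (R F) Vb τ : ℝ) ^ u F := by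
        refine sum_le_sum fun τ _ => ?_
        -- the residual join on the free variables is covered by `u / α`
        have hres := joinCount_compl_le_prod_degree_rpow hRA (w := fun F => u F / α)
          (fun F hF => div_nonneg (hu F hF) hα.le)
          (fun x hx => by rw [← sum_div, le_div_iff₀ hα, one_mul]; exact hαu x hx) τ
        calc (joinCount E R A Vbᶜ τ : ℝ) ^ α
            ≤ (∏ F ∈ E, (degree (R F) Vb τ : ℝ) ^ (u F / α)) ^ α :=
              rpow_le_rpow (Nat.cast_nonneg _) hres hα.le
          _ = ∏ F ∈ E, (degree (R F) Vb τ : ℝ) ^ u F := by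
              rw [← finsetProd_rpow _ _ fun F _ => rpow_nonneg (hdeg0 F τ) _]
              refine prod_congr rfl fun F _ => ?_
              rw [← rpow_mul (hdeg0 F τ), div_mul_cancel₀ _ hα.ne']
    _ ≤ ∏ F ∈ E, (∑ s ∈ pinnedBox A t₀ (Vb ∩ F), (degree (R F) Vb s : ℝ)) ^ u F :=
        sum_pinnedBox_prod_rpow_le hu (fun F _ => hdeg0 F)
          (fun F _ _ _ h => congrArg _ (dependsOn_degree _ _ h)) A t₀ hVb
    _ = ∏ F ∈ E, (#(R F) : ℝ) ^ u F := prod_congr rfl fun F hF => by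
        rw [← Nat.cast_sum, sum_degree_pinnedBox (hRA F hF)]

theorem finite_and_ncard_le_of_forall_lt_ncard_join
    (hcover : ∀ x, ∃ F ∈ E, x ∈ F)
    (hRA : ∀ F ∈ E, ∀ q ∈ R F, ∀ y : F, q y ∈ A y)
    {u : Finset V → ℝ} (hu : ∀ F ∈ E, 0 ≤ u F) {Vb : Finset V}
    (hVb : ∀ x ∈ Vb, 1 ≤ ∑ F ∈ E with x ∈ F, u F) {α : ℝ} (hα : 0 < α)
    (hαu : ∀ x ∉ Vb, α ≤ ∑ F ∈ E with x ∈ F, u F) {T : ℝ} (hT : 0 < T)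
    {H : Set (∀ x : Vb, D x)}
    (hH : ∀ a ∈ H,
      T < ({t | (∀ F ∈ E, F.restrict t ∈ R F) ∧ Vb.restrict t = a}.ncard : ℝ)) :
    H.Finite ∧ (H.ncard : ℝ) ≤ (∏ F ∈ E, (#(R F) : ℝ) ^ u F) / T ^ α := by
  rcases H.eq_empty_or_nonempty with rfl | ⟨a₀, ha₀⟩
  · simp only [Set.finite_empty, Set.ncard_empty, Nat.cast_zero, true_and]
    positivity
  have hfiber : ∀ a ∈ H, ∃ t, (∀ F ∈ E, F.restrict t ∈ R F) ∧ Vb.restrict t = a :=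
    fun a ha => Set.nonempty_of_ncard_ne_zero (Nat.cast_ne_zero.1 (hT.trans (hH a ha)).ne')
  obtain ⟨t₀, -⟩ := hfiber a₀ ha₀
  set heavy := {τ ∈ pinnedBox A t₀ Vb | T < (joinCount E R A Vbᶜ τ : ℝ)}
  have hsub : H ⊆ heavy.image Vb.restrict := by
    intro a ha
    obtain ⟨t, ht, rfl⟩ := hfiber a ha
    have hres : Vb.restrict (Vb.piecewise t t₀) = Vb.restrict t :=
      funext fun x => piecewise_eq_of_mem _ _ _ x.2
    refine mem_image.2 ⟨Vb.piecewise t t₀, mem_filter.2 ⟨?_, ?_⟩, hres⟩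
    · rw [mem_pinnedBox]
      refine ⟨fun x hx => ?_, fun x hx => piecewise_eq_of_notMem _ _ _ hx⟩
      rw [piecewise_eq_of_mem _ _ _ hx]
      exact apply_mem_of_forall_restrict_mem hcover hRA ht x
    · rw [← ncard_setOf_restrict_eq_joinCount hcover hRA, hres]
      exact hH _ ha
  have hcount : (#heavy : ℝ) * T ^ α ≤ ∏ F ∈ E, (#(R F) : ℝ) ^ u F :=
    (card_filter_lt_mul_rpow_le_sum_rpow _ (fun _ _ => Nat.cast_nonneg _) hT.le hα.le).trans
      (sum_joinCount_rpow_le hRA hu hVb hα hαu t₀)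
  refine ⟨(heavy.image _).finite_toSet.subset hsub, ?_⟩
  rw [le_div_iff₀ (rpow_pos_of_pos hT _)]
  refine le_trans (mul_le_mul_of_nonneg_right ?_ (rpow_nonneg hT.le _)) hcount
  calc (H.ncard : ℝ) ≤ #(heavy.image Vb.restrict) := by
        exact_mod_cast
          (Set.ncard_le_ncard hsub (finite_toSet _)).trans_eq (Set.ncard_coe_finset _)
    _ ≤ #heavy := by exact_mod_cast card_image_le

end Join

theorem stmt1_general {V : Type*} [Fintype V] [DecidableEq V]
    (D : V → Type*)
    (E : Finset (Finset V))
    (hcover : ∀ x : V, ∃ F ∈ E, x ∈ F)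
    (R : (F : Finset V) → Set ((x : F) → D x.1))
    (hRfin : ∀ F ∈ E, (R F).Finite)
    (Vb : Finset V)
    (u : Finset V → ℝ)
    (hu0 : ∀ F ∈ E, 0 ≤ u F)
    (hucov : ∀ x : V, 1 ≤ ∑ F ∈ E, if x ∈ F then u F else 0)
    (α : ℝ)
    (hα : IsLeast {s : ℝ | ∃ x : V, x ∉ Vb ∧ s = ∑ F ∈ E, if x ∈ F then u F else 0} α)
    (T : ℝ) (hT : 0 < T) :
    {a : (x : Vb) → D x.1 |
        T < (({t : (x : V) → D x |
            (∀ F ∈ E, (fun x : F => t x.1) ∈ R F) ∧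
            (fun x : Vb => t x.1) = a}).ncard : ℝ)}.Finite ∧
    (({a : (x : Vb) → D x.1 |
        T < (({t : (x : V) → D x |
            (∀ F ∈ E, (fun x : F => t x.1) ∈ R F) ∧
            (fun x : Vb => t x.1) = a}).ncard : ℝ)}).ncard : ℝ)
      ≤ (∏ F ∈ E, ((R F).ncard : ℝ) ^ (u F)) / T ^ α := by
  classical
  obtain ⟨Rf, hRf⟩ :
      ∃ Rf : ∀ F : Finset V, Finset ((x : F) → D x), ∀ F ∈ E, ↑(Rf F) = R F :=
    ⟨fun F => if h : F ∈ E then (hRfin F h).toFinset else ∅, fun F hF => by simp [hF]⟩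
  obtain ⟨A, hRA⟩ := exists_finset_forall_apply_mem E Rf
  have hjoin : ∀ t : ∀ x, D x,
      (∀ F ∈ E, (fun x : F => t x.1) ∈ R F) ↔ ∀ F ∈ E, F.restrict t ∈ Rf F :=
    fun t => forall₂_congr fun F hF => by rw [← hRf F hF]; rfl
  have hprod : ∏ F ∈ E, ((R F).ncard : ℝ) ^ u F = ∏ F ∈ E, (#(Rf F) : ℝ) ^ u F :=
    prod_congr rfl fun F hF => by rw [← hRf F hF, Set.ncard_coe_finset]
  simp only [← sum_filter] at hucov hα
  obtain ⟨⟨x₀, -, rfl⟩, hαu⟩ := hα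
  simp only [hjoin, hprod]
  exact finite_and_ncard_le_of_forall_lt_ncard_join hcover hRA hu0 (fun x _ => hucov x)
    (one_pos.trans_le (hucov x₀)) (fun x hx => hαu ⟨x, hx, rfl⟩) hT fun a ha => ha

/-- Let `H = (V, E)` be a hypergraph with a finite relation `R F` over each
hyperedge `F ∈ E`, let `Vb` be a proper subset of `V`, let `u` be a fractional edge cover
of `V`, and let `α` be its slack.  Then for every real `T > 0`, the set of tuples `a` over
`Vb` such that the number of tuples `t` in the join `⋈_{F ∈ E} R_F` with `t[Vb] = a`
exceeds `T` is finite and has cardinality at most `(∏_{F ∈ E} |R F| ^ (u F)) / T ^ α`. -/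
theorem stmt1 {V : Type*} [Fintype V] [DecidableEq V]
    (D : V → Type*)
    (E : Finset (Finset V))
    (hcover : ∀ x : V, ∃ F ∈ E, x ∈ F)
    (R : (F : Finset V) → Set ((x : F) → D x.1))
    (hRfin : ∀ F ∈ E, (R F).Finite)
    (Vb : Finset V) (hVb : Vb ≠ Finset.univ)
    (u : Finset V → ℝ)
    (hu0 : ∀ F ∈ E, 0 ≤ u F)
    (hucov : ∀ x : V, 1 ≤ ∑ F ∈ E, if x ∈ F then u F else 0)
    (α : ℝ)
    (hα : IsLeast {s : ℝ | ∃ x : V, x ∉ Vb ∧ s = ∑ F ∈ E, if x ∈ F then u F else 0} α)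
    (T : ℝ) (hT : 0 < T) :
    {a : (x : Vb) → D x.1 |
        T < (({t : (x : V) → D x |
            (∀ F ∈ E, (fun x : F => t x.1) ∈ R F) ∧
            (fun x : Vb => t x.1) = a}).ncard : ℝ)}.Finite ∧
    (({a : (x : Vb) → D x.1 |
        T < (({t : (x : V) → D x |
            (∀ F ∈ E, (fun x : F => t x.1) ∈ R F) ∧
            (fun x : Vb => t x.1) = a}).ncard : ℝ)}).ncard : ℝ)
      ≤ (∏ F ∈ E, ((R F).ncard : ℝ) ^ (u F)) / T ^ α :=
  stmt1_general D E hcover R hRfin Vb u hu0 hucov α hα T hT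
end

section
/- Let H = (V, E) be a hypergraph with a finite relation R_F over each hyperedge F ∈ E, let V_b be a proper subset of V, let u be a fractional edge cover of V, and let α be its slack. Then for every tuple a over V_b, the number of tuples t in the join ⋈_{F∈E} R_F with t[V_b] = a is at most ∏_{F ∈ E} |R_F(a)|^{u_F/α}. -/
/-!
Dividing `u` by the slack `α` gives weights `w F = u F / α` under which every free variable has
total weight at least `1`. Free variables are then eliminated one at a time: fixing the value `v`
of a free variable `x` splits the join into fibres, each bounded inductively by
`∏ |R_F(a, x = v)| ^ w F`. Edges avoiding `x` contribute the same factor to every fibre, and for the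
edges containing `x` Hölder's inequality (whose exponents `w F` sum to at least `1`) bounds the sum
over `v` by `∏ (∑_v |R_F(a, x = v)|) ^ w F = ∏ |R_F(a)| ^ w F`. Once every variable is bound, the
join has at most one tuple, and it lies in every `R_F(a)`.
-/

open scoped ENNReal
open Finset

namespace ENNReal

theorem sum_rpow_le_rpow_sum {ι : Type*} (s : Finset ι) (f : ι → ℝ≥0∞) {p : ℝ} (hp : 1 ≤ p) :
    ∑ i ∈ s, f i ^ p ≤ (∑ i ∈ s, f i) ^ p := by
  classical
  induction s using Finset.induction_on with
  | empty => simp [zero_rpow_of_pos (zero_lt_one.trans_le hp)]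
  | insert i s hi ih =>
    rw [sum_insert hi, sum_insert hi]
    exact (add_le_add_right ih _).trans (add_rpow_le_rpow_add _ _ hp)

theorem tsum_rpow_le_rpow_tsum {ι : Type*} (f : ι → ℝ≥0∞) {p : ℝ} (hp : 1 ≤ p) :
    ∑' i, f i ^ p ≤ (∑' i, f i) ^ p := by
  rw [ENNReal.tsum_eq_iSup_sum]
  exact iSup_le fun s => (sum_rpow_le_rpow_sum s f hp).trans <|
    rpow_le_rpow (ENNReal.sum_le_tsum s) (zero_le_one.trans hp)

theorem tsum_prod_rpow_le_prod_rpow_tsum {ι κ : Type*} (s : Finset ι) (f : ι → κ → ℝ≥0∞)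
    {p : ι → ℝ} (hp : ∑ i ∈ s, p i = 1) (hp0 : ∀ i ∈ s, 0 ≤ p i) :
    ∑' a, ∏ i ∈ s, f i a ^ p i ≤ ∏ i ∈ s, (∑' a, f i a) ^ p i := by
  let : MeasurableSpace κ := ⊤
  have : MeasurableSingletonClass κ := ⟨fun _ => trivial⟩
  simpa only [MeasureTheory.lintegral_count] using
    lintegral_prod_norm_pow_le (μ := MeasureTheory.Measure.count) s
      (fun i _ => (measurable_from_top (f := f i)).aemeasurable) hp hp0

theorem tsum_prod_rpow_le_prod_rpow_tsum_of_one_le_sum {ι κ : Type*} (s : Finset ι)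
    (f : ι → κ → ℝ≥0∞) {p : ι → ℝ} (hp : 1 ≤ ∑ i ∈ s, p i) (hp0 : ∀ i ∈ s, 0 ≤ p i) :
    ∑' a, ∏ i ∈ s, f i a ^ p i ≤ ∏ i ∈ s, (∑' a, f i a) ^ p i := by
  set β := ∑ i ∈ s, p i
  have hβ : 0 < β := zero_lt_one.trans_le hp
  have hpow : ∀ i, ∀ x : ℝ≥0∞, (x ^ β) ^ (p i / β) = x ^ p i := fun i x => by
    rw [← rpow_mul, mul_div_cancel₀ _ hβ.ne']
  calc ∑' a, ∏ i ∈ s, f i a ^ p i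
      = ∑' a, ∏ i ∈ s, (f i a ^ β) ^ (p i / β) := by simp only [hpow]
    _ ≤ ∏ i ∈ s, (∑' a, f i a ^ β) ^ (p i / β) :=
        tsum_prod_rpow_le_prod_rpow_tsum s _ (by rw [← sum_div, div_self hβ.ne'])
          fun i hi => div_nonneg (hp0 i hi) hβ.le
    _ ≤ ∏ i ∈ s, ((∑' a, f i a) ^ β) ^ (p i / β) :=
        prod_le_prod' fun i hi => rpow_le_rpow (tsum_rpow_le_rpow_tsum _ hp)
          (div_nonneg (hp0 i hi) hβ.le)
    _ = ∏ i ∈ s, (∑' a, f i a) ^ p i := by simp only [hpow]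

end ENNReal

theorem Set.encard_eq_tsum_encard_fiber {α β : Type*} (s : Set α) (f : α → β) :
    (s.encard : ℝ≥0∞) = ∑' b, ({a ∈ s | f a = b}.encard : ℝ≥0∞) := by
  have hs : s = ⋃ b, {a ∈ s | f a = b} := by ext; simp
  have hd : Set.univ.PairwiseDisjoint fun b => {a ∈ s | f a = b} :=
    fun b _ c _ hbc => Set.disjoint_left.2 fun a hb hc => hbc (hb.2.symm.trans hc.2)
  simp only [← ENNReal.tsum_set_one]
  conv_lhs => rw [hs]
  exact ENNReal.tsum_biUnion (f := fun _ => 1) hd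

theorem Set.ncard_eq_toReal_encard {α : Type*} (s : Set α) :
    (s.ncard : ℝ) = (s.encard : ℝ≥0∞).toReal := by
  rcases s.finite_or_infinite with hs | hs
  · rw [← hs.cast_ncard_eq]; simp
  · simp [hs.ncard, hs.encard_eq]

section BoundJoin

variable {V : Type*} {D : V → Type*}

/-- The paper's `⋈ R_F` and `R_F(a)` restricted to tuples that agree with `a` on `B`, where the
bound values are read off a full tuple `b`; anchoring at a full tuple lets `B` grow by
`Function.update` without dependent casts. -/
def boundJoin (E : Finset (Finset V)) (R : (F : Finset V) → Set ((x : F) → D x.1))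
    (B : Set V) (b : (x : V) → D x) : Set ((x : V) → D x) :=
  {t | (∀ F ∈ E, (fun x : F => t x.1) ∈ R F) ∧ ∀ x ∈ B, t x = b x}

def boundRel (R : (F : Finset V) → Set ((x : F) → D x.1)) (F : Finset V) (B : Set V)
    (b : (x : V) → D x) : Set ((x : F) → D x.1) :=
  {s ∈ R F | ∀ x : F, x.1 ∈ B → s x = b x}

variable {E : Finset (Finset V)} {R : (F : Finset V) → Set ((x : F) → D x.1)}
  {B : Set V} {b : (x : V) → D x} {w : Finset V → ℝ}

theorem restrict_mem_boundRel {t : (x : V) → D x} (ht : t ∈ boundJoin E R B b) {F : Finset V}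
    (hF : F ∈ E) : (fun x : F => t x.1) ∈ boundRel R F B b :=
  ⟨ht.1 F hF, fun x hx => ht.2 x hx⟩

theorem boundJoin_univ_subset : boundJoin E R Set.univ b ⊆ {b} :=
  fun _ ht => funext fun x => ht.2 x trivial

theorem boundJoin_insert [DecidableEq V] {x : V} (hx : x ∉ B) (v : D x) :
    boundJoin E R (insert x B) (Function.update b x v) = {t ∈ boundJoin E R B b | t x = v} := by
  have hb : ∀ y ∈ B, Function.update b x v y = b y := fun y hy =>
    Function.update_of_ne (by rintro rfl; exact hx hy) _ _
  ext t
  simp only [boundJoin, Set.mem_insert_iff, forall_eq_or_imp, Function.update_self,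
    Set.mem_ofPred_eq]
  constructor
  · rintro ⟨hR, hxv, hB⟩
    exact ⟨⟨hR, fun y hy => (hB y hy).trans (hb y hy)⟩, hxv⟩
  · rintro ⟨⟨hR, hB⟩, hxv⟩
    exact ⟨hR, hxv, fun y hy => (hB y hy).trans (hb y hy).symm⟩

theorem boundRel_insert [DecidableEq V] {x : V} (hx : x ∉ B) (F : Finset V) (v : D x) :
    boundRel R F (insert x B) (Function.update b x v) =
      {s ∈ boundRel R F B b | ∀ hxF : x ∈ F, s ⟨x, hxF⟩ = v} := by
  have hb : ∀ y ∈ B, Function.update b x v y = b y := fun y hy =>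
    Function.update_of_ne (by rintro rfl; exact hx hy) _ _
  ext s
  simp only [boundRel, Set.mem_insert_iff, Set.mem_ofPred_eq]
  constructor
  · rintro ⟨hR, hB⟩
    refine ⟨⟨hR, fun y hy => (hB y (.inr hy)).trans (hb y hy)⟩, fun hxF => ?_⟩
    simpa using hB ⟨x, hxF⟩ (.inl rfl)
  · rintro ⟨⟨hR, hB⟩, hxv⟩
    refine ⟨hR, fun ⟨y, hyF⟩ hy => ?_⟩
    rcases hy with rfl | hy
    · simpa using hxv hyF
    · exact (hB _ hy).trans (hb y hy).symm

theorem encard_boundJoin_univ_le (hw0 : ∀ F ∈ E, 0 ≤ w F) :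
    ((boundJoin E R Set.univ b).encard : ℝ≥0∞) ≤
      ∏ F ∈ E, ((boundRel R F Set.univ b).encard : ℝ≥0∞) ^ w F := by
  rcases (boundJoin E R Set.univ b).eq_empty_or_nonempty with h | ⟨t, ht⟩
  · simp [h]
  have hone : ((boundJoin E R Set.univ b).encard : ℝ≥0∞) ≤ 1 := by
    exact_mod_cast (Set.encard_le_encard boundJoin_univ_subset).trans (Set.encard_singleton b).le
  refine hone.trans <| one_le_prod' fun F hF => ?_
  rw [← ENNReal.one_rpow (w F)]
  refine ENNReal.rpow_le_rpow ?_ (hw0 F hF)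
  exact_mod_cast Set.one_le_encard_iff_nonempty.2 ⟨_, restrict_mem_boundRel ht hF⟩

theorem encard_boundJoin_le_of_insert [DecidableEq V] (hw0 : ∀ F ∈ E, 0 ≤ w F) {x : V}
    (hx : x ∉ B) (hwx : 1 ≤ ∑ F ∈ E with x ∈ F, w F)
    (h : ∀ v : D x, ((boundJoin E R (insert x B) (Function.update b x v)).encard : ℝ≥0∞) ≤
      ∏ F ∈ E, ((boundRel R F (insert x B) (Function.update b x v)).encard : ℝ≥0∞) ^ w F) :
    ((boundJoin E R B b).encard : ℝ≥0∞) ≤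
      ∏ F ∈ E, ((boundRel R F B b).encard : ℝ≥0∞) ^ w F := by
  set r : Finset V → D x → ℝ≥0∞ := fun F v =>
    (boundRel R F (insert x B) (Function.update b x v)).encard
  have hr_notMem : ∀ F, x ∉ F → ∀ v, r F v = (boundRel R F B b).encard := fun F hxF v => by
    simp [r, boundRel_insert hx, hxF]
  have hr_mem : ∀ F, x ∈ F → ∑' v, r F v = (boundRel R F B b).encard := fun F hxF => by
    simp [r, boundRel_insert hx, hxF, Set.encard_eq_tsum_encard_fiber (boundRel R F B b)
      (fun s => s ⟨x, hxF⟩)]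
  calc ((boundJoin E R B b).encard : ℝ≥0∞)
      = ∑' v, ((boundJoin E R (insert x B) (Function.update b x v)).encard : ℝ≥0∞) := by
        simp only [boundJoin_insert hx]
        exact Set.encard_eq_tsum_encard_fiber (boundJoin E R B b) fun t => t x
    _ ≤ ∑' v, ∏ F ∈ E, r F v ^ w F := ENNReal.tsum_le_tsum h
    _ = (∑' v, ∏ F ∈ E with x ∈ F, r F v ^ w F) *
          ∏ F ∈ E with x ∉ F, ((boundRel R F B b).encard : ℝ≥0∞) ^ w F := by
        rw [← ENNReal.tsum_mul_right]
        refine tsum_congr fun v => ?_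
        rw [← prod_filter_mul_prod_filter_not E (x ∈ ·)]
        congr 1
        exact prod_congr rfl fun F hF => by rw [hr_notMem F (mem_filter.1 hF).2]
    _ ≤ (∏ F ∈ E with x ∈ F, (∑' v, r F v) ^ w F) *
          ∏ F ∈ E with x ∉ F, ((boundRel R F B b).encard : ℝ≥0∞) ^ w F := by
        gcongr
        exact ENNReal.tsum_prod_rpow_le_prod_rpow_tsum_of_one_le_sum _ r hwx
          fun F hF => hw0 F (mem_filter.1 hF).1
    _ = ∏ F ∈ E, ((boundRel R F B b).encard : ℝ≥0∞) ^ w F := by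
        rw [← prod_filter_mul_prod_filter_not E (x ∈ ·)]
        congr 1
        exact prod_congr rfl fun F hF => by rw [hr_mem F (mem_filter.1 hF).2]

theorem encard_boundJoin_le [DecidableEq V] (hw0 : ∀ F ∈ E, 0 ≤ w F) (hB : Bᶜ.Finite)
    (hw : ∀ x ∉ B, 1 ≤ ∑ F ∈ E with x ∈ F, w F) (b : (x : V) → D x) :
    ((boundJoin E R B b).encard : ℝ≥0∞) ≤
      ∏ F ∈ E, ((boundRel R F B b).encard : ℝ≥0∞) ^ w F := by
  obtain ⟨U, hU⟩ : ∃ U : Finset V, Bᶜ ⊆ U := ⟨hB.toFinset, by simp⟩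
  clear hB
  induction U using Finset.induction_on generalizing B b with
  | empty =>
    obtain rfl : B = Set.univ := by simpa using hU
    exact encard_boundJoin_univ_le hw0
  | insert x U _ ih =>
    by_cases hx : x ∈ B
    · exact ih hw b fun y hy =>
        (Finset.mem_insert.1 (hU hy)).resolve_left (by rintro rfl; exact hy hx)
    · refine encard_boundJoin_le_of_insert hw0 hx (hw x hx) fun v => ih ?_ _ ?_
      · exact fun y hy => hw y fun h => hy (Set.mem_insert_of_mem x h)
      · intro y hy
        simp only [Set.mem_compl_iff, Set.mem_insert_iff, not_or] at hy
        exact (Finset.mem_insert.1 (hU hy.2)).resolve_left hy.1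

theorem ncard_boundJoin_le [Finite V] [DecidableEq V] (hR : ∀ F ∈ E, (R F).Finite)
    (hw0 : ∀ F ∈ E, 0 ≤ w F) (hw : ∀ x ∉ B, 1 ≤ ∑ F ∈ E with x ∈ F, w F) (b : (x : V) → D x) :
    ((boundJoin E R B b).ncard : ℝ) ≤ ∏ F ∈ E, ((boundRel R F B b).ncard : ℝ) ^ w F := by
  have hrel_fin : ∀ F ∈ E, ((boundRel R F B b).encard : ℝ≥0∞) ≠ ⊤ := fun F hF => by
    simpa using (hR F hF).subset (show boundRel R F B b ⊆ R F from Set.sep_subset _ _)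
  simp only [Set.ncard_eq_toReal_encard, ENNReal.toReal_rpow, ← ENNReal.toReal_prod]
  refine ENNReal.toReal_mono ?_ (encard_boundJoin_le hw0 (Set.toFinite _) hw b)
  exact ENNReal.prod_ne_top fun F hF => ENNReal.rpow_ne_top_of_nonneg (hw0 F hF) (hrel_fin F hF)

end BoundJoin

theorem stmt2_general {V : Type*} [Fintype V] [DecidableEq V]
    (D : V → Type*)
    (E : Finset (Finset V))
    (R : (F : Finset V) → Set ((x : F) → D x.1))
    (hRfin : ∀ F ∈ E, (R F).Finite)
    (Vb : Finset V)
    (u : Finset V → ℝ)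
    (hu0 : ∀ F ∈ E, 0 ≤ u F)
    (hucov : ∀ x : V, 1 ≤ ∑ F ∈ E, if x ∈ F then u F else 0)
    (α : ℝ)
    (hα : IsLeast {s : ℝ | ∃ x : V, x ∉ Vb ∧ s = ∑ F ∈ E, if x ∈ F then u F else 0} α)
    (a : (x : Vb) → D x.1) :
    (({t : (x : V) → D x |
        (∀ F ∈ E, (fun x : F => t x.1) ∈ R F) ∧
        (fun x : Vb => t x.1) = a}).ncard : ℝ)
      ≤ ∏ F ∈ E,
          (({s ∈ R F | ∀ (x : V) (hF : x ∈ F) (hb : x ∈ Vb),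
              s ⟨x, hF⟩ = a ⟨x, hb⟩}).ncard : ℝ) ^ (u F / α) := by
  obtain ⟨⟨x₀, -, rfl⟩, hα_le⟩ := hα
  have hα_pos : 0 < ∑ F ∈ E, if x₀ ∈ F then u F else 0 := zero_lt_one.trans_le (hucov x₀)
  -- any tuple of the join extending `a` serves as the anchor for `boundJoin`
  rcases Set.eq_empty_or_nonempty {t : (x : V) → D x |
      (∀ F ∈ E, (fun x : F => t x.1) ∈ R F) ∧ (fun x : Vb => t x.1) = a} with h | ⟨t₀, -, rfl⟩
  · rw [h, Set.ncard_empty, Nat.cast_zero]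
    exact Finset.prod_nonneg fun F _ => Real.rpow_nonneg (Nat.cast_nonneg _) _
  have hjoin : {t : (x : V) → D x | (∀ F ∈ E, (fun x : F => t x.1) ∈ R F) ∧
      (fun x : Vb => t x.1) = fun x : Vb => t₀ x.1} = boundJoin E R (↑Vb) t₀ := by
    ext t
    simp [boundJoin, funext_iff]
  have hrel : ∀ F, {s ∈ R F | ∀ (x : V) (hF : x ∈ F) (hb : x ∈ Vb), s ⟨x, hF⟩ = t₀ x} =
      boundRel R F (↑Vb) t₀ := fun F => by
    ext s
    simp [boundRel]
  simp only [hjoin, hrel]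
  refine ncard_boundJoin_le hRfin (fun F hF => div_nonneg (hu0 F hF) hα_pos.le) ?_ t₀
  intro x hx
  rw [← Finset.sum_div, Finset.sum_filter, one_le_div hα_pos]
  exact hα_le ⟨x, hx, rfl⟩

/-- Let `H = (V, E)` be a hypergraph with a finite relation `R F` over each
hyperedge `F ∈ E`, let `Vb` be a proper subset of `V`, let `u` be a fractional edge cover
of `V`, and let `α` be its slack.  Then for every tuple `a` over `Vb`, the number of
tuples `t` in the join `⋈_{F ∈ E} R_F` with `t[Vb] = a` is at most
`∏_{F ∈ E} |R_F(a)| ^ (u F / α)`. -/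
theorem stmt2 {V : Type*} [Fintype V] [DecidableEq V]
    (D : V → Type*)
    (E : Finset (Finset V))
    (hcover : ∀ x : V, ∃ F ∈ E, x ∈ F)
    (R : (F : Finset V) → Set ((x : F) → D x.1))
    (hRfin : ∀ F ∈ E, (R F).Finite)
    (Vb : Finset V) (hVb : Vb ≠ Finset.univ)
    (u : Finset V → ℝ)
    (hu0 : ∀ F ∈ E, 0 ≤ u F)
    (hucov : ∀ x : V, 1 ≤ ∑ F ∈ E, if x ∈ F then u F else 0)
    (α : ℝ)
    (hα : IsLeast {s : ℝ | ∃ x : V, x ∉ Vb ∧ s = ∑ F ∈ E, if x ∈ F then u F else 0} α)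
    (a : (x : Vb) → D x.1) :
    (({t : (x : V) → D x |
        (∀ F ∈ E, (fun x : F => t x.1) ∈ R F) ∧
        (fun x : Vb => t x.1) = a}).ncard : ℝ)
      ≤ ∏ F ∈ E,
          (({s ∈ R F | ∀ (x : V) (hF : x ∈ F) (hb : x ∈ Vb),
              s ⟨x, hF⟩ = a ⟨x, hb⟩}).ncard : ℝ) ^ (u F / α) :=
  stmt2_general D E R hRfin Vb u hu0 hucov α hα a
end

section
/- Let H = (V, E) be a hypergraph with a finite relation R_F over each hyperedge F ∈ E, let V_b ⊆ V, and let u : E → ℝ_{≥0} be a fractional edge cover of V_b. Then the set A of tuples a over V_b with R_F(a) ≠ ∅ for every F ∈ E is finite, and Σ_{a ∈ A} ∏_{F ∈ E} |R_F(a)|^{u_F} ≤ ∏_{F ∈ E} |R_F|^{u_F}. -/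
/-- Multivariate weighted Hölder inequality with total weight at least 1. -/
theorem holder_multi {ι β : Type*} (t : Finset ι) (W : Finset β)
    (w : ι → ℝ) (f : ι → β → ℝ)
    (hw : ∀ i ∈ t, 0 ≤ w i) (hs : 1 ≤ ∑ i ∈ t, w i)
    (hf : ∀ i ∈ t, ∀ v ∈ W, 0 ≤ f i v) :
    ∑ v ∈ W, ∏ i ∈ t, f i v ^ w i ≤ ∏ i ∈ t, (∑ v ∈ W, f i v) ^ w i := by
  set s : ℝ := ∑ i ∈ t, w i with hsdef
  have hs0 : 0 < s := lt_of_lt_of_le one_pos hs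
  set S : ι → ℝ := fun i => ∑ v ∈ W, f i v with hSdef
  have hS0 : ∀ i ∈ t, 0 ≤ S i := fun i hi => Finset.sum_nonneg (fun v hv => hf i hi v hv)
  by_cases hdeg : ∃ i ∈ t, S i = 0 ∧ w i ≠ 0
  · obtain ⟨i, hit, hSi, hwi⟩ := hdeg
    have hfz : ∀ v ∈ W, f i v = 0 := by
      intro v hv
      exact (Finset.sum_eq_zero_iff_of_nonneg (fun v hv => hf i hit v hv)).1 hSi v hv
    have hL : ∑ v ∈ W, ∏ j ∈ t, f j v ^ w j = 0 := by
      apply Finset.sum_eq_zero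
      intro v hv
      apply Finset.prod_eq_zero hit
      rw [hfz v hv, Real.zero_rpow hwi]
    have hR : 0 ≤ ∏ i ∈ t, S i ^ w i :=
      Finset.prod_nonneg fun j hj => Real.rpow_nonneg (hS0 j hj) _
    rw [hL]; exact hR
  · push_neg at hdeg
    have hSpos : ∀ i ∈ t, w i ≠ 0 → 0 < S i := by
      intro i hi hwi
      rcases (hS0 i hi).lt_or_eq with h | h
      · exact h
      · exact absurd (hdeg i hi h.symm) hwi
    have hprodnn : 0 ≤ ∏ i ∈ t, S i ^ w i :=
      Finset.prod_nonneg fun j hj => Real.rpow_nonneg (hS0 j hj) _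
    have key : ∀ v ∈ W, ∏ i ∈ t, f i v ^ w i ≤
        (∏ i ∈ t, S i ^ w i) * ∏ i ∈ t, (f i v / S i) ^ (w i / s) := by
      intro v hv
      rw [← Finset.prod_mul_distrib]
      apply Finset.prod_le_prod
      · intro i hi; exact Real.rpow_nonneg (hf i hi v hv) _
      · intro i hi
        by_cases hwi : w i = 0
        · simp [hwi]
        · have hSi : 0 < S i := hSpos i hi hwi
          have hg0 : 0 ≤ f i v / S i := div_nonneg (hf i hi v hv) hSi.le
          have hg1 : f i v / S i ≤ 1 := by
            rw [div_le_one hSi]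
            exact Finset.single_le_sum (fun v hv => hf i hi v hv) hv
          have h1 : f i v ^ w i = S i ^ w i * (f i v / S i) ^ w i := by
            rw [← Real.mul_rpow hSi.le hg0, mul_div_cancel₀ _ hSi.ne']
          rw [h1]
          apply mul_le_mul_of_nonneg_left _ (Real.rpow_nonneg hSi.le _)
          rcases hg0.lt_or_eq with hg | hg
          · apply Real.rpow_le_rpow_of_exponent_ge hg hg1
            rw [div_le_iff₀ hs0]
            nlinarith [hw i hi]
          · rw [← hg, Real.zero_rpow hwi, Real.zero_rpow]
            positivity
    calc ∑ v ∈ W, ∏ i ∈ t, f i v ^ w i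
        ≤ ∑ v ∈ W, (∏ i ∈ t, S i ^ w i) * ∏ i ∈ t, (f i v / S i) ^ (w i / s) :=
          Finset.sum_le_sum key
      _ = (∏ i ∈ t, S i ^ w i) * ∑ v ∈ W, ∏ i ∈ t, (f i v / S i) ^ (w i / s) := by
          rw [Finset.mul_sum]
      _ ≤ (∏ i ∈ t, S i ^ w i) * 1 := by
          apply mul_le_mul_of_nonneg_left _ hprodnn
          have hAM : ∀ v ∈ W, ∏ i ∈ t, (f i v / S i) ^ (w i / s) ≤
              ∑ i ∈ t, (w i / s) * (f i v / S i) := by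
            intro v hv
            apply Real.geom_mean_le_arith_mean_weighted
            · intro i hi; exact div_nonneg (hw i hi) hs0.le
            · rw [← Finset.sum_div, ← hsdef, div_self hs0.ne']
            · intro i hi; exact div_nonneg (hf i hi v hv) (hS0 i hi)
          calc ∑ v ∈ W, ∏ i ∈ t, (f i v / S i) ^ (w i / s)
              ≤ ∑ v ∈ W, ∑ i ∈ t, (w i / s) * (f i v / S i) := Finset.sum_le_sum hAM
            _ = ∑ i ∈ t, (w i / s) * (S i / S i) := by
                rw [Finset.sum_comm]
                apply Finset.sum_congr rfl
                intro i hi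
                rw [← Finset.mul_sum, ← Finset.sum_div]
            _ ≤ ∑ i ∈ t, w i / s := by
                apply Finset.sum_le_sum
                intro i hi
                by_cases hSi : S i = 0
                · simp [hSi, div_nonneg (hw i hi) hs0.le]
                · rw [div_self hSi, mul_one]
            _ = 1 := by rw [← Finset.sum_div, ← hsdef, div_self hs0.ne']
      _ = ∏ i ∈ t, S i ^ w i := mul_one _


/-- The set of tuples in `R F` matching a partial assignment `a` on `S`. -/
def MatchSet {V : Type*} (D : V → Type*)
    (R : (F : Finset V) → Set ((x : F) → D x.1))
    (S : Finset V) (F : Finset V) (a : (x : S) → D x.1) : Set ((x : F) → D x.1) :=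
  {s ∈ R F | ∀ (x : V) (hF : x ∈ F) (hb : x ∈ S), s ⟨x, hF⟩ = a ⟨x, hb⟩}

theorem stmt3_key {V : Type*} [DecidableEq V] (D : V → Type*) (E : Finset (Finset V))
    (R : (F : Finset V) → Set ((x : F) → D x.1))
    (hRfin : ∀ F ∈ E, (R F).Finite)
    (u : Finset V → ℝ) (hu0 : ∀ F ∈ E, 0 ≤ u F)
    (S : Finset V) (hScov : ∀ x ∈ S, 1 ≤ ∑ F ∈ E, if x ∈ F then u F else 0) :
    {a : (x : S) → D x.1 | ∀ F ∈ E, MatchSet D R S F a ≠ ∅}.Finite ∧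
    ∑ᶠ a ∈ {a : (x : S) → D x.1 | ∀ F ∈ E, MatchSet D R S F a ≠ ∅},
      ∏ F ∈ E, ((MatchSet D R S F a).ncard : ℝ) ^ (u F)
      ≤ ∏ F ∈ E, ((R F).ncard : ℝ) ^ (u F) := by
  classical
  have hRHS0 : 0 ≤ ∏ F ∈ E, ((R F).ncard : ℝ) ^ (u F) :=
    Finset.prod_nonneg fun F _ => Real.rpow_nonneg (Nat.cast_nonneg _) _
  induction S using Finset.induction_on with
  | empty =>
    have huniq : ∀ a b : (x : (∅ : Finset V)) → D x.1, a = b := fun a b =>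
      funext fun y => absurd y.2 (Finset.notMem_empty y.1)
    have hsub : Set.Subsingleton
        {a : (x : (∅ : Finset V)) → D x.1 | ∀ F ∈ E, MatchSet D R ∅ F a ≠ ∅} :=
      fun a _ b _ => huniq a b
    refine ⟨hsub.finite, ?_⟩
    rcases hsub.eq_empty_or_singleton with h | ⟨a0, h⟩
    · rw [h]
      simpa using hRHS0
    · rw [h, finsum_mem_singleton]
      have hMeq : ∀ F, MatchSet D R ∅ F a0 = R F := by
        intro F
        ext s
        simp [MatchSet]
      refine le_of_eq (Finset.prod_congr rfl fun F _ => ?_)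
      rw [hMeq F]
  | @insert x S' hxS ih =>
    obtain ⟨hfin', hsum'⟩ := ih fun y hy => hScov y (Finset.mem_insert_of_mem hy)
    have hxmem : x ∈ insert x S' := Finset.mem_insert_self x S'
    have hxcov : 1 ≤ ∑ F ∈ E, if x ∈ F then u F else 0 := hScov x hxmem
    have hEx : 1 ≤ ∑ F ∈ E.filter (fun F => x ∈ F), u F := by
      rw [Finset.sum_filter]; exact hxcov
    have hF0 : ∃ F ∈ E, x ∈ F := by
      by_contra h
      push_neg at h
      have h0 : (∑ F ∈ E, if x ∈ F then u F else 0) = 0 :=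
        Finset.sum_eq_zero fun F hF => by simp [h F hF]
      rw [h0] at hxcov; linarith
    obtain ⟨F0, hF0E, hxF0⟩ := hF0
    -- restriction and value maps
    set res : ((y : (insert x S' : Finset V)) → D y.1) → ((y : S') → D y.1) :=
      fun a y => a ⟨y.1, Finset.mem_insert_of_mem y.2⟩ with hresdef
    set val : ((y : (insert x S' : Finset V)) → D y.1) → D x :=
      fun a => a ⟨x, hxmem⟩ with hvaldef
    -- key decomposition of match sets
    have hmatch : ∀ (F : Finset V) (a : (y : (insert x S' : Finset V)) → D y.1),
        MatchSet D R (insert x S') F a =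
          {s ∈ MatchSet D R S' F (res a) | ∀ h : x ∈ F, s ⟨x, h⟩ = val a} := by
      intro F a
      ext s
      constructor
      · rintro ⟨h1, h2⟩
        exact ⟨⟨h1, fun y hyF hyS => h2 y hyF (Finset.mem_insert_of_mem hyS)⟩,
          fun h => h2 x h hxmem⟩
      · rintro ⟨⟨h1, h2⟩, h3⟩
        refine ⟨h1, fun y hyF hyb => ?_⟩
        rcases Finset.mem_insert.1 hyb with h | h
        · subst h; exact h3 hyF
        · exact h2 y hyF h
    have hMfin : ∀ F ∈ E, ∀ a' : (y : S') → D y.1, (MatchSet D R S' F a').Finite :=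
      fun F hF a' => (hRfin F hF).subset fun s hs => hs.1
    have hinj : ∀ a b : (y : (insert x S' : Finset V)) → D y.1,
        res a = res b → val a = val b → a = b := by
      intro a b h1 h2
      funext y
      rcases Finset.mem_insert.1 y.2 with h | h
      · have : y = ⟨x, hxmem⟩ := Subtype.ext h
        rw [this]; exact h2
      · have : a ⟨y.1, Finset.mem_insert_of_mem h⟩ = b ⟨y.1, Finset.mem_insert_of_mem h⟩ :=
          congrFun h1 ⟨y.1, h⟩
        have hy : y = ⟨y.1, Finset.mem_insert_of_mem h⟩ := Subtype.ext rfl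
        rw [hy]; exact this
    set A : Set ((y : (insert x S' : Finset V)) → D y.1) :=
      {a | ∀ F ∈ E, MatchSet D R (insert x S') F a ≠ ∅} with hAdef
    set A' : Set ((y : S') → D y.1) :=
      {a | ∀ F ∈ E, MatchSet D R S' F a ≠ ∅} with hA'def
    have hA_res : ∀ a ∈ A, res a ∈ A' := by
      intro a ha F hF
      obtain ⟨s, hs⟩ := Set.nonempty_iff_ne_empty.2 (ha F hF)
      rw [hmatch F a] at hs
      exact Set.nonempty_iff_ne_empty.1 ⟨s, hs.1⟩
    have hA_val : ∀ a ∈ A, val a ∈ (fun s => s ⟨x, hxF0⟩) '' MatchSet D R S' F0 (res a) := by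
      intro a ha
      obtain ⟨s, hs⟩ := Set.nonempty_iff_ne_empty.2 (ha F0 hF0E)
      rw [hmatch F0 a] at hs
      exact ⟨s, hs.1, hs.2 hxF0⟩
    -- finiteness of A
    have hfinA : A.Finite := by
      have hT : (⋃ a' ∈ A', ({a'} : Set ((y : S') → D y.1)) ×ˢ
          ((fun s => s ⟨x, hxF0⟩) '' MatchSet D R S' F0 a')).Finite :=
        Set.Finite.biUnion hfin' fun a' _ =>
          (Set.finite_singleton a').prod ((hMfin F0 hF0E a').image _)
      have himg : (fun a => (res a, val a)) '' A ⊆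
          ⋃ a' ∈ A', ({a'} : Set ((y : S') → D y.1)) ×ˢ
            ((fun s => s ⟨x, hxF0⟩) '' MatchSet D R S' F0 a') := by
        rintro p ⟨a, ha, rfl⟩
        refine Set.mem_biUnion (hA_res a ha) ?_
        exact ⟨rfl, hA_val a ha⟩
      refine Set.Finite.of_finite_image (hT.subset himg) ?_
      intro a _ b _ h
      exact hinj a b (congrArg Prod.fst h) (congrArg Prod.snd h)
    refine ⟨hfinA, ?_⟩
    rw [← hfin'.coe_toFinset, finsum_mem_coe_finset] at hsum'
    rw [← hfinA.coe_toFinset, finsum_mem_coe_finset]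
    have hmaps : ∀ a ∈ hfinA.toFinset, res a ∈ hfin'.toFinset := by
      intro a ha
      rw [Set.Finite.mem_toFinset] at ha ⊢
      exact hA_res a ha
    have hfiber : ∀ a' ∈ hfin'.toFinset,
        ∑ a ∈ hfinA.toFinset.filter (fun a => res a = a'),
            ∏ F ∈ E, ((MatchSet D R (insert x S') F a).ncard : ℝ) ^ u F
          ≤ ∏ F ∈ E, ((MatchSet D R S' F a').ncard : ℝ) ^ u F := by
      intro a' ha'
      set W : Finset (D x) := ((hMfin F0 hF0E a').toFinset).image
        (fun s => s ⟨x, hxF0⟩) with hWdef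
      set cnt : Finset V → D x → ℝ := fun F v =>
        (({s ∈ MatchSet D R S' F a' | ∀ h : x ∈ F, s ⟨x, h⟩ = v}).ncard : ℝ) with hcntdef
      set g : D x → ℝ := fun v => ∏ F ∈ E, cnt F v ^ u F with hgdef
      have hg0 : ∀ v, 0 ≤ g v := fun v =>
        Finset.prod_nonneg fun F _ => Real.rpow_nonneg (Nat.cast_nonneg _) _
      -- each summand equals g (val a)
      have hNa : ∀ a ∈ hfinA.toFinset.filter (fun a => res a = a'),
          ∏ F ∈ E, ((MatchSet D R (insert x S') F a).ncard : ℝ) ^ u F = g (val a) := by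
        intro a ha
        obtain ⟨hamem, hr⟩ := Finset.mem_filter.1 ha
        refine Finset.prod_congr rfl fun F hF => ?_
        have hMeq : MatchSet D R (insert x S') F a =
            {s ∈ MatchSet D R S' F a' | ∀ h : x ∈ F, s ⟨x, h⟩ = val a} := by
          rw [hmatch F a, hr]
        rw [hMeq]
      -- values lie in W
      have hvalW : ∀ a ∈ hfinA.toFinset.filter (fun a => res a = a'), val a ∈ W := by
        intro a ha
        obtain ⟨hamem, hr⟩ := Finset.mem_filter.1 ha
        have := hA_val a ((Set.Finite.mem_toFinset _).1 hamem)
        rw [hr] at this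
        obtain ⟨s, hs, heq⟩ := this
        exact Finset.mem_image.2 ⟨s, (Set.Finite.mem_toFinset _).2 hs, heq⟩
      -- reindex the fiber sum over values
      have hreindex : ∑ a ∈ hfinA.toFinset.filter (fun a => res a = a'),
          ∏ F ∈ E, ((MatchSet D R (insert x S') F a).ncard : ℝ) ^ u F
            ≤ ∑ v ∈ W, g v := by
        rw [Finset.sum_congr rfl hNa]
        have hinj' : ∀ a ∈ hfinA.toFinset.filter (fun a => res a = a'),
            ∀ b ∈ hfinA.toFinset.filter (fun a => res a = a'), val a = val b → a = b := by
          intro a ha b hb h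
          obtain ⟨_, hra⟩ := Finset.mem_filter.1 ha
          obtain ⟨_, hrb⟩ := Finset.mem_filter.1 hb
          exact hinj a b (hra.trans hrb.symm) h
        calc ∑ a ∈ hfinA.toFinset.filter (fun a => res a = a'), g (val a)
            = ∑ v ∈ (hfinA.toFinset.filter (fun a => res a = a')).image val, g v :=
              (Finset.sum_image hinj').symm
          _ ≤ ∑ v ∈ W, g v :=
              Finset.sum_le_sum_of_subset_of_nonneg
                (fun v hv => by
                  obtain ⟨a, ha, rfl⟩ := Finset.mem_image.1 hv
                  exact hvalW a ha)
                (fun v _ _ => hg0 v)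
      -- split the product over edges containing x and the rest
      set C : ℝ := ∏ F ∈ E.filter (fun F => ¬ x ∈ F),
        ((MatchSet D R S' F a').ncard : ℝ) ^ u F with hCdef
      have hC0 : 0 ≤ C :=
        Finset.prod_nonneg fun F _ => Real.rpow_nonneg (Nat.cast_nonneg _) _
      have hsplit : ∀ v, g v =
          (∏ F ∈ E.filter (fun F => x ∈ F), cnt F v ^ u F) * C := by
        intro v
        have hsplit0 : ∏ F ∈ E, cnt F v ^ u F =
            (∏ F ∈ E.filter (fun F => x ∈ F), cnt F v ^ u F) *
              ∏ F ∈ E.filter (fun F => ¬ x ∈ F), cnt F v ^ u F :=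
          (Finset.prod_filter_mul_prod_filter_not E _ _).symm
        simp only [hgdef]
        rw [hsplit0, hCdef]
        congr 1
        refine Finset.prod_congr rfl fun F hF => ?_
        obtain ⟨hFE, hxF⟩ := Finset.mem_filter.1 hF
        have hseteq : {s ∈ MatchSet D R S' F a' | ∀ h : x ∈ F, s ⟨x, h⟩ = v} =
            MatchSet D R S' F a' := by
          ext s
          exact ⟨fun h => h.1, fun h => ⟨h, fun hxf => absurd hxf hxF⟩⟩
        simp only [hcntdef]
        rw [hseteq]
      -- per-edge counting bound
      have hcard : ∀ F ∈ E.filter (fun F => x ∈ F),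
          ∑ v ∈ W, cnt F v ≤ ((MatchSet D R S' F a').ncard : ℝ) := by
        intro F hF
        obtain ⟨hFE, hxF⟩ := Finset.mem_filter.1 hF
        set M : Finset ((y : F) → D y.1) := (hMfin F hFE a').toFinset with hMdef
        have h1 : ∀ v, cnt F v = ((M.filter fun s => s ⟨x, hxF⟩ = v).card : ℝ) := by
          intro v
          have hset : {s ∈ MatchSet D R S' F a' | ∀ h : x ∈ F, s ⟨x, h⟩ = v} =
              ↑(M.filter fun s => s ⟨x, hxF⟩ = v) := by
            ext s
            simp only [Finset.coe_filter, Set.mem_setOf_eq, Set.mem_sep_iff,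
              hMdef, Set.Finite.mem_toFinset]
            exact ⟨fun h => ⟨h.1, h.2 hxF⟩, fun h => ⟨h.1, fun _ => h.2⟩⟩
          rw [hcntdef]
          simp only
          rw [hset, Set.ncard_coe_finset]
        have hdisj : ∀ v ∈ W, ∀ w ∈ W, v ≠ w →
            Disjoint (M.filter fun s => s ⟨x, hxF⟩ = v)
              (M.filter fun s => s ⟨x, hxF⟩ = w) := by
          intro v _ w _ hvw
          rw [Finset.disjoint_left]
          intro s hsv hsw
          exact hvw ((Finset.mem_filter.1 hsv).2.symm.trans (Finset.mem_filter.1 hsw).2)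
        have hnat : ∑ v ∈ W, (M.filter fun s => s ⟨x, hxF⟩ = v).card ≤ M.card := by
          rw [← Finset.card_biUnion hdisj]
          exact Finset.card_le_card (Finset.biUnion_subset.2
            fun v _ => Finset.filter_subset _ _)
        have hMn : (MatchSet D R S' F a').ncard = M.card := by
          rw [← Set.ncard_coe_finset, hMdef, Set.Finite.coe_toFinset]
        calc ∑ v ∈ W, cnt F v
            = ∑ v ∈ W, ((M.filter fun s => s ⟨x, hxF⟩ = v).card : ℝ) :=
              Finset.sum_congr rfl fun v _ => h1 v
          _ = ((∑ v ∈ W, (M.filter fun s => s ⟨x, hxF⟩ = v).card : ℕ) : ℝ) := by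
              push_cast; ring
          _ ≤ (M.card : ℝ) := Nat.cast_le.2 hnat
          _ = ((MatchSet D R S' F a').ncard : ℝ) := by rw [hMn]
      -- Hölder
      have hholder : ∑ v ∈ W, ∏ F ∈ E.filter (fun F => x ∈ F), cnt F v ^ u F ≤
          ∏ F ∈ E.filter (fun F => x ∈ F),
            (∑ v ∈ W, cnt F v) ^ u F :=
        holder_multi _ W u (fun F v => cnt F v)
          (fun F hF => hu0 F (Finset.mem_filter.1 hF).1) hEx
          (fun F _ v _ => Nat.cast_nonneg _)
      calc ∑ a ∈ hfinA.toFinset.filter (fun a => res a = a'),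
            ∏ F ∈ E, ((MatchSet D R (insert x S') F a).ncard : ℝ) ^ u F
          ≤ ∑ v ∈ W, g v := hreindex
        _ = (∑ v ∈ W, ∏ F ∈ E.filter (fun F => x ∈ F), cnt F v ^ u F) * C := by
            rw [Finset.sum_congr rfl fun v _ => hsplit v, ← Finset.sum_mul]
        _ ≤ (∏ F ∈ E.filter (fun F => x ∈ F),
              (∑ v ∈ W, cnt F v) ^ u F) * C := by
            apply mul_le_mul_of_nonneg_right hholder hC0
        _ ≤ (∏ F ∈ E.filter (fun F => x ∈ F),
              ((MatchSet D R S' F a').ncard : ℝ) ^ u F) * C := by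
            apply mul_le_mul_of_nonneg_right _ hC0
            apply Finset.prod_le_prod
            · intro F _
              exact Real.rpow_nonneg
                (Finset.sum_nonneg fun v _ => Nat.cast_nonneg _) _
            · intro F hF
              exact Real.rpow_le_rpow
                (Finset.sum_nonneg fun v _ => Nat.cast_nonneg _)
                (hcard F hF) (hu0 F (Finset.mem_filter.1 hF).1)
        _ = ∏ F ∈ E, ((MatchSet D R S' F a').ncard : ℝ) ^ u F := by
            rw [hCdef, Finset.prod_filter_mul_prod_filter_not]
    calc ∑ a ∈ hfinA.toFinset,
          ∏ F ∈ E, ((MatchSet D R (insert x S') F a).ncard : ℝ) ^ u F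
        = ∑ a' ∈ hfin'.toFinset, ∑ a ∈ hfinA.toFinset.filter (fun a => res a = a'),
            ∏ F ∈ E, ((MatchSet D R (insert x S') F a).ncard : ℝ) ^ u F :=
          (Finset.sum_fiberwise_of_maps_to hmaps _).symm
      _ ≤ ∑ a' ∈ hfin'.toFinset, ∏ F ∈ E, ((MatchSet D R S' F a').ncard : ℝ) ^ u F :=
          Finset.sum_le_sum hfiber
      _ ≤ ∏ F ∈ E, ((R F).ncard : ℝ) ^ u F := hsum'

/-- query decomposition lemma: Let `H = (V, E)` be a hypergraph with a
finite relation `R F` over each hyperedge `F ∈ E`, let `Vb ⊆ V`, and let `u : E → ℝ≥0`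
be a fractional edge cover of `Vb`.  Then the set `A` of tuples `a` over `Vb` with
`R_F(a) ≠ ∅` for every `F ∈ E` is finite, and
`Σ_{a ∈ A} ∏_{F ∈ E} |R_F(a)| ^ (u F) ≤ ∏_{F ∈ E} |R F| ^ (u F)`. -/
theorem stmt3 {V : Type*} [Fintype V] [DecidableEq V]
    (D : V → Type*)
    (E : Finset (Finset V))
    (hcover : ∀ x : V, ∃ F ∈ E, x ∈ F)
    (R : (F : Finset V) → Set ((x : F) → D x.1))
    (hRfin : ∀ F ∈ E, (R F).Finite)
    (Vb : Finset V)
    (u : Finset V → ℝ)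
    (hu0 : ∀ F ∈ E, 0 ≤ u F)
    (hucov : ∀ x ∈ Vb, 1 ≤ ∑ F ∈ E, if x ∈ F then u F else 0) :
    {a : (x : Vb) → D x.1 |
        ∀ F ∈ E, {s ∈ R F | ∀ (x : V) (hF : x ∈ F) (hb : x ∈ Vb),
            s ⟨x, hF⟩ = a ⟨x, hb⟩} ≠ ∅}.Finite ∧
    ∑ᶠ a ∈ {a : (x : Vb) → D x.1 |
        ∀ F ∈ E, {s ∈ R F | ∀ (x : V) (hF : x ∈ F) (hb : x ∈ Vb),
            s ⟨x, hF⟩ = a ⟨x, hb⟩} ≠ ∅},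
      ∏ F ∈ E,
        (({s ∈ R F | ∀ (x : V) (hF : x ∈ F) (hb : x ∈ Vb),
            s ⟨x, hF⟩ = a ⟨x, hb⟩}).ncard : ℝ) ^ (u F)
      ≤ ∏ F ∈ E, ((R F).ncard : ℝ) ^ (u F) := by
  exact stmt3_key D E R hRfin u hu0 Vb hucov
end

section
/- (AGM bound) Let H = (V, E) be a hypergraph with a finite relation R_F over each hyperedge F ∈ E, and let u : E → ℝ_{≥0} be a fractional edge cover of V. Then the join ⋈_{F∈E} R_F is finite and |⋈_{F∈E} R_F| ≤ ∏_{F ∈ E} |R_F|^{u_F}. -/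
/-!
Induct on the set `A` of free variables, all others being fixed to the values of a given
tuple `τ`: the restricted join is bounded by `∏ F, |R_F(A, τ)| ^ u F`, where `R_F(A, τ)` consists
of the tuples of `R F` agreeing with `τ` outside `A`. Freeing a variable `x` splits the join
according to the value `a` of `x`. Relations not containing `x` do not see `a`, while for
`F ∋ x` the sets `R_F(A, τ[x ↦ a])` partition `R_F(insert x A, τ)`. The step is then the
generalized Hölder inequality `∑ₐ ∏_F c_F(a) ^ u F ≤ ∏_F (∑ₐ c_F(a)) ^ u F` over the edges
through `x`, whose weights sum to at least one; Hölder in turn is weighted AM-GM after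
normalizing each `c_F` to total mass one.
-/

open Finset

namespace Real

theorem sum_prod_rpow_le_one_of_sum_le_one {ι α : Type*} (s : Finset ι) (t : Finset α)
    (w : ι → ℝ) (g : ι → α → ℝ) (hw : ∀ i ∈ s, 0 ≤ w i) (hw1 : 1 ≤ ∑ i ∈ s, w i)
    (hg : ∀ i ∈ s, ∀ a ∈ t, 0 ≤ g i a) (hg1 : ∀ i ∈ s, ∑ a ∈ t, g i a ≤ 1) :
    ∑ a ∈ t, ∏ i ∈ s, g i a ^ w i ≤ 1 := by
  set c := ∑ i ∈ s, w i
  have hc : 0 < c := one_pos.trans_le hw1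
  have hwc : ∀ i ∈ s, 0 ≤ w i / c := fun i hi => div_nonneg (hw i hi) hc.le
  have hsum_wc : ∑ i ∈ s, w i / c = 1 := by rw [← sum_div, div_self hc.ne']
  -- Scaling the weights down to total one can only enlarge each factor, as `g i a ≤ 1`.
  have hpoint : ∀ a ∈ t, ∏ i ∈ s, g i a ^ w i ≤ ∑ i ∈ s, w i / c * g i a := by
    intro a ha
    calc ∏ i ∈ s, g i a ^ w i ≤ ∏ i ∈ s, g i a ^ (w i / c) := by
          refine prod_le_prod (fun i hi => rpow_nonneg (hg i hi a ha) _) fun i hi => ?_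
          refine rpow_le_rpow_of_exponent_ge' (hg i hi a ha) ?_ (hwc i hi)
            (div_le_self (hw i hi) hw1)
          exact (single_le_sum (hg i hi) ha).trans (hg1 i hi)
      _ ≤ ∑ i ∈ s, w i / c * g i a :=
          geom_mean_le_arith_mean_weighted s _ _ hwc hsum_wc fun i hi => hg i hi a ha
  calc ∑ a ∈ t, ∏ i ∈ s, g i a ^ w i ≤ ∑ a ∈ t, ∑ i ∈ s, w i / c * g i a := sum_le_sum hpoint
    _ = ∑ i ∈ s, w i / c * ∑ a ∈ t, g i a := by rw [sum_comm]; simp only [mul_sum]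
    _ ≤ ∑ i ∈ s, w i / c * 1 := by
          gcongr with i hi
          · exact hwc i hi
          · exact hg1 i hi
    _ = 1 := by simp only [mul_one, hsum_wc]

theorem sum_prod_rpow_le_prod_sum_rpow {ι α : Type*} (s : Finset ι) (t : Finset α)
    (w : ι → ℝ) (f : ι → α → ℝ) (hw : ∀ i ∈ s, 0 ≤ w i) (hw1 : 1 ≤ ∑ i ∈ s, w i)
    (hf : ∀ i ∈ s, ∀ a ∈ t, 0 ≤ f i a) :
    ∑ a ∈ t, ∏ i ∈ s, f i a ^ w i ≤ ∏ i ∈ s, (∑ a ∈ t, f i a) ^ w i := by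
  set S := fun i => ∑ a ∈ t, f i a
  have hS : ∀ i ∈ s, 0 ≤ S i := fun i hi => sum_nonneg (hf i hi)
  have hfS : ∀ i ∈ s, ∀ a ∈ t, f i a = S i * (f i a / S i) := by
    intro i hi a ha
    rcases eq_or_ne (S i) 0 with h0 | h0
    · rw [h0, zero_mul]
      exact (sum_eq_zero_iff_of_nonneg (hf i hi)).1 h0 a ha
    · rw [mul_div_cancel₀ _ h0]
  have hnormalized : ∑ a ∈ t, ∏ i ∈ s, (f i a / S i) ^ w i ≤ 1 :=
    sum_prod_rpow_le_one_of_sum_le_one s t w _ hw hw1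
      (fun i hi a ha => div_nonneg (hf i hi a ha) (hS i hi))
      fun i _ => by rw [← sum_div]; exact div_self_le_one _
  calc ∑ a ∈ t, ∏ i ∈ s, f i a ^ w i
        = (∏ i ∈ s, S i ^ w i) * ∑ a ∈ t, ∏ i ∈ s, (f i a / S i) ^ w i := by
          rw [mul_sum]
          refine sum_congr rfl fun a ha => ?_
          rw [← prod_mul_distrib]
          refine prod_congr rfl fun i hi => ?_
          rw [← mul_rpow (hS i hi) (div_nonneg (hf i hi a ha) (hS i hi)), ← hfS i hi a ha]
    _ ≤ ∏ i ∈ s, S i ^ w i := by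
          refine mul_le_of_le_one_right ?_ hnormalized
          exact prod_nonneg fun i hi => rpow_nonneg (hS i hi) _

end Real

theorem Set.sum_ncard_inter_preimage_singleton_le {α β : Type*} {S : Set α} (hS : S.Finite)
    (f : α → β) (T : Finset β) : ∑ b ∈ T, (S ∩ f ⁻¹' {b}).ncard ≤ S.ncard := by
  classical
  have hfiber : ∀ b, (S ∩ f ⁻¹' {b}).ncard = #{a ∈ hS.toFinset | f a = b} := by
    intro b
    rw [← Set.ncard_coe_finset]
    congr 1
    ext a
    simp
  simp only [hfiber, Set.ncard_eq_toFinset_card S hS]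
  exact (sum_card_fiberwise_eq_card_filter _ _ _).trans_le (card_filter_le _ _)

namespace Hypergraph

variable {V : Type*} {D : V → Type*}

def join (E : Finset (Finset V)) (R : (F : Finset V) → Set ((x : F) → D x)) :
    Set ((x : V) → D x) :=
  {t | ∀ F ∈ E, F.restrict t ∈ R F}

def joinSlice (E : Finset (Finset V)) (R : (F : Finset V) → Set ((x : F) → D x))
    (A : Finset V) (τ : (x : V) → D x) : Set ((x : V) → D x) :=
  {t ∈ join E R | ∀ x ∉ A, t x = τ x}

def relSlice (R : (F : Finset V) → Set ((x : F) → D x)) (F A : Finset V)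
    (τ : (x : V) → D x) : Set ((x : F) → D x) :=
  {r ∈ R F | ∀ x : F, x.1 ∉ A → r x = τ x}

theorem join_finite (E : Finset (Finset V)) (hcover : ∀ x : V, ∃ F ∈ E, x ∈ F)
    (R : (F : Finset V) → Set ((x : F) → D x)) (hRfin : ∀ F ∈ E, (R F).Finite) :
    (join E R).Finite := by
  let restrictAll : ((x : V) → D x) → (F : E) → (x : F.1) → D x := fun t F => F.1.restrict t
  have hinj : Set.InjOn restrictAll (join E R) := by
    intro t _ t' _ h
    funext x
    obtain ⟨F, hF, hxF⟩ := hcover x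
    exact congrFun (congrFun h ⟨F, hF⟩) ⟨x, hxF⟩
  refine Set.Finite.of_finite_image ?_ hinj
  refine (Set.Finite.pi (t := fun F : E => R F) fun F => hRfin F.1 F.2).subset ?_
  rintro _ ⟨t, ht, rfl⟩ F -
  exact ht F.1 F.2

theorem ncard_joinSlice_empty_le (E : Finset (Finset V))
    (R : (F : Finset V) → Set ((x : F) → D x)) (hRfin : ∀ F ∈ E, (R F).Finite)
    (u : Finset V → ℝ) (hu0 : ∀ F ∈ E, 0 ≤ u F) (τ : (x : V) → D x) :
    ((joinSlice E R ∅ τ).ncard : ℝ) ≤ ∏ F ∈ E, ((relSlice R F ∅ τ).ncard : ℝ) ^ u F := by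
  have hsub : joinSlice E R ∅ τ ⊆ {τ} := fun t ht => funext fun x => ht.2 x (Finset.notMem_empty x)
  rcases (joinSlice E R ∅ τ).eq_empty_or_nonempty with hempty | ⟨t, ht⟩
  · rw [hempty, Set.ncard_empty, Nat.cast_zero]
    exact Finset.prod_nonneg fun F _ => Real.rpow_nonneg (Nat.cast_nonneg _) _
  have hτ : τ ∈ join E R := hsub ht ▸ ht.1
  have hone : ∀ F ∈ E, (1 : ℝ) ≤ ((relSlice R F ∅ τ).ncard : ℝ) ^ u F := by
    intro F hF
    refine Real.one_le_rpow ?_ (hu0 F hF)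
    have hfin : (relSlice R F ∅ τ).Finite := (hRfin F hF).subset fun r hr => hr.1
    exact_mod_cast (Set.ncard_pos hfin).2 ⟨F.restrict τ, hτ F hF, fun _ _ => rfl⟩
  calc ((joinSlice E R ∅ τ).ncard : ℝ) ≤ 1 := by
        exact_mod_cast (Set.ncard_le_ncard hsub).trans (Set.ncard_singleton τ).le
    _ ≤ _ := Finset.one_le_prod hone

variable [DecidableEq V]

theorem joinSlice_insert_eq_biUnion (E : Finset (Finset V))
    (R : (F : Finset V) → Set ((x : F) → D x)) {A : Finset V} {x : V} (hxA : x ∉ A)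
    (τ : (x : V) → D x) {Val : Finset (D x)}
    (hVal : ∀ t ∈ joinSlice E R (insert x A) τ, t x ∈ Val) :
    joinSlice E R (insert x A) τ = ⋃ a ∈ Val, joinSlice E R A (Function.update τ x a) := by
  ext t
  simp only [Set.mem_iUnion, exists_prop]
  constructor
  · intro ht
    refine ⟨t x, hVal t ht, ht.1, fun y hy => ?_⟩
    by_cases hyx : y = x
    · subst hyx; rw [Function.update_self]
    · rw [Function.update_of_ne hyx, ht.2 y (by simp [hyx, hy])]
  · rintro ⟨a, -, hjoin, hagree⟩
    refine ⟨hjoin, fun y hy => ?_⟩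
    have hyx : y ≠ x := fun h => hy (h ▸ Finset.mem_insert_self x A)
    rw [hagree y (fun h => hy (Finset.mem_insert_of_mem h)), Function.update_of_ne hyx]

theorem relSlice_update_of_notMem (R : (F : Finset V) → Set ((x : F) → D x))
    {F : Finset V} (A : Finset V) {x : V} (hxF : x ∉ F) (τ : (x : V) → D x) (a : D x) :
    relSlice R F A (Function.update τ x a) = relSlice R F (insert x A) τ := by
  ext r
  refine and_congr_right fun _ => forall_congr' fun y => ?_
  have hyx : y.1 ≠ x := fun h => hxF (h ▸ y.2)
  simp [Finset.mem_insert, hyx]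

theorem relSlice_update_of_mem (R : (F : Finset V) → Set ((x : F) → D x))
    {F A : Finset V} {x : V} (hxA : x ∉ A) (hxF : x ∈ F) (τ : (x : V) → D x) (a : D x) :
    relSlice R F A (Function.update τ x a)
      = relSlice R F (insert x A) τ ∩ (fun r => r ⟨x, hxF⟩) ⁻¹' {a} := by
  ext r
  simp only [relSlice, Set.mem_inter_iff, Set.mem_ofPred_eq, Set.mem_preimage,
    Set.mem_singleton_iff, Finset.mem_insert, not_or]
  constructor
  · rintro ⟨hr, hagree⟩
    refine ⟨⟨hr, fun y hy => ?_⟩, ?_⟩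
    · rw [hagree y hy.2, Function.update_of_ne hy.1]
    · simpa using hagree ⟨x, hxF⟩ hxA
  · rintro ⟨⟨hr, hagree⟩, hrx⟩
    refine ⟨hr, fun y hy => ?_⟩
    by_cases hyx : y.1 = x
    · obtain ⟨y, hyF⟩ := y
      subst hyx
      simpa using hrx
    · rw [hagree y ⟨hyx, hy⟩, Function.update_of_ne hyx]

theorem sum_ncard_relSlice_update_le (R : (F : Finset V) → Set ((x : F) → D x))
    {F A : Finset V} {x : V} (hxA : x ∉ A) (hxF : x ∈ F) (hRfin : (R F).Finite)
    (τ : (x : V) → D x) (Val : Finset (D x)) :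
    ∑ a ∈ Val, (relSlice R F A (Function.update τ x a)).ncard
      ≤ (relSlice R F (insert x A) τ).ncard := by
  simp only [relSlice_update_of_mem R hxA hxF]
  exact Set.sum_ncard_inter_preimage_singleton_le (hRfin.subset fun r hr => hr.1) _ Val

theorem sum_prod_ncard_relSlice_update_le (E : Finset (Finset V))
    (R : (F : Finset V) → Set ((x : F) → D x)) (hRfin : ∀ F ∈ E, (R F).Finite)
    (u : Finset V → ℝ) (hu0 : ∀ F ∈ E, 0 ≤ u F) {A : Finset V} {x : V} (hxA : x ∉ A)
    (hucov : 1 ≤ ∑ F ∈ E, if x ∈ F then u F else 0) (τ : (x : V) → D x)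
    (Val : Finset (D x)) :
    ∑ a ∈ Val, ∏ F ∈ E, ((relSlice R F A (Function.update τ x a)).ncard : ℝ) ^ u F
      ≤ ∏ F ∈ E, ((relSlice R F (insert x A) τ).ncard : ℝ) ^ u F := by
  set c : Finset V → D x → ℝ := fun F a => (relSlice R F A (Function.update τ x a)).ncard
  set K := ∏ F ∈ E with x ∉ F, ((relSlice R F (insert x A) τ).ncard : ℝ) ^ u F
  have hK : 0 ≤ K := prod_nonneg fun F _ => Real.rpow_nonneg (Nat.cast_nonneg _) _
  have hsplit : ∀ a, ∏ F ∈ E, c F a ^ u F = (∏ F ∈ E with x ∈ F, c F a ^ u F) * K := by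
    intro a
    rw [← prod_filter_mul_prod_filter_not E (x ∈ ·)]
    congr 1
    refine prod_congr rfl fun F hF => ?_
    simp only [c, relSlice_update_of_notMem R A (mem_filter.1 hF).2]
  calc ∑ a ∈ Val, ∏ F ∈ E, c F a ^ u F
        = (∑ a ∈ Val, ∏ F ∈ E with x ∈ F, c F a ^ u F) * K := by simp only [hsplit, sum_mul]
    _ ≤ (∏ F ∈ E with x ∈ F, (∑ a ∈ Val, c F a) ^ u F) * K := by
        gcongr
        exact Real.sum_prod_rpow_le_prod_sum_rpow _ _ _ _ (fun F hF => hu0 F (mem_filter.1 hF).1)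
          (by rwa [sum_filter]) fun _ _ _ _ => Nat.cast_nonneg _
    _ ≤ (∏ F ∈ E with x ∈ F, ((relSlice R F (insert x A) τ).ncard : ℝ) ^ u F) * K := by
        gcongr with F hF
        · exact hu0 F (mem_filter.1 hF).1
        · obtain ⟨hFE, hxF⟩ := mem_filter.1 hF
          simp only [c]
          exact_mod_cast sum_ncard_relSlice_update_le R hxA hxF (hRfin F hFE) τ Val
    _ = ∏ F ∈ E, ((relSlice R F (insert x A) τ).ncard : ℝ) ^ u F :=
        prod_filter_mul_prod_filter_not _ _ _

theorem ncard_joinSlice_le (E : Finset (Finset V)) (hcover : ∀ x : V, ∃ F ∈ E, x ∈ F)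
    (R : (F : Finset V) → Set ((x : F) → D x)) (hRfin : ∀ F ∈ E, (R F).Finite)
    (u : Finset V → ℝ) (hu0 : ∀ F ∈ E, 0 ≤ u F) (A : Finset V)
    (hucov : ∀ x ∈ A, 1 ≤ ∑ F ∈ E, if x ∈ F then u F else 0) (τ : (x : V) → D x) :
    ((joinSlice E R A τ).ncard : ℝ) ≤ ∏ F ∈ E, ((relSlice R F A τ).ncard : ℝ) ^ u F := by
  induction A using Finset.induction_on generalizing τ with
  | empty => exact ncard_joinSlice_empty_le E R hRfin u hu0 τ
  | insert x A hxA ih =>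
    obtain ⟨F₀, hF₀, hxF₀⟩ := hcover x
    set Val := ((hRfin F₀ hF₀).image fun r => r ⟨x, hxF₀⟩).toFinset
    have hVal : ∀ t ∈ joinSlice E R (insert x A) τ, t x ∈ Val := fun t ht => by
      simpa [Val] using ⟨_, ht.1 F₀ hF₀, rfl⟩
    rw [joinSlice_insert_eq_biUnion E R hxA τ hVal]
    calc _ ≤ ∑ a ∈ Val, ((joinSlice E R A (Function.update τ x a)).ncard : ℝ) := by
          exact_mod_cast Val.set_ncard_biUnion_le _
      _ ≤ ∑ a ∈ Val, ∏ F ∈ E, ((relSlice R F A (Function.update τ x a)).ncard : ℝ) ^ u F :=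
          sum_le_sum fun a _ => ih (fun y hy => hucov y (mem_insert_of_mem hy)) _
      _ ≤ _ := sum_prod_ncard_relSlice_update_le E R hRfin u hu0 hxA
          (hucov x (mem_insert_self x A)) τ Val

end Hypergraph

open Hypergraph in
/-- AGM bound: Let `H = (V, E)` be a hypergraph with a finite relation
`R F` over each hyperedge `F ∈ E`, and let `u : E → ℝ≥0` be a fractional edge cover of
`V`.  Then the join `⋈_{F ∈ E} R_F` is finite and
`|⋈_{F ∈ E} R_F| ≤ ∏_{F ∈ E} |R F| ^ (u F)`. -/
theorem stmt4 {V : Type*} [Fintype V] [DecidableEq V]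
    (D : V → Type*)
    (E : Finset (Finset V))
    (hcover : ∀ x : V, ∃ F ∈ E, x ∈ F)
    (R : (F : Finset V) → Set ((x : F) → D x.1))
    (hRfin : ∀ F ∈ E, (R F).Finite)
    (u : Finset V → ℝ)
    (hu0 : ∀ F ∈ E, 0 ≤ u F)
    (hucov : ∀ x : V, 1 ≤ ∑ F ∈ E, if x ∈ F then u F else 0) :
    {t : (x : V) → D x | ∀ F ∈ E, (fun x : F => t x.1) ∈ R F}.Finite ∧
    (({t : (x : V) → D x | ∀ F ∈ E, (fun x : F => t x.1) ∈ R F}).ncard : ℝ)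
      ≤ ∏ F ∈ E, ((R F).ncard : ℝ) ^ (u F) := by
  refine ⟨join_finite E hcover R hRfin, ?_⟩
  change ((join E R).ncard : ℝ) ≤ _
  rcases (join E R).eq_empty_or_nonempty with hempty | ⟨τ, -⟩
  · rw [hempty, Set.ncard_empty, Nat.cast_zero]
    exact Finset.prod_nonneg fun F _ => Real.rpow_nonneg (Nat.cast_nonneg _) _
  have hjoin : joinSlice E R Finset.univ τ = join E R := by simp [joinSlice]
  have hrel : ∀ F, relSlice R F Finset.univ τ = R F := by simp [relSlice]
  simpa [hjoin, hrel] using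
    ncard_joinSlice_le E hcover R hRfin u hu0 Finset.univ (fun x _ => hucov x) τ
end

section
/- Let A, B, C be sets and let R ⊆ A × B, S ⊆ B × C, T ⊆ A × C be finite relations. Then the number of triples (a, b, c) ∈ A × B × C with (a, b) ∈ R, (b, c) ∈ S, and (a, c) ∈ T is at most (|R| · |S| · |T|)^{1/2}. -/
/-!
Group the triangles `(a, b, c)` by their edge `(a, c) ∈ T`. The fibre over `(a, c)` injects
both into the `R`-row of `a` (of size `r(a)`) and into the `S`-column of `c` (of size `s(c)`),
so its size `d(a, c)` satisfies `d(a, c)² ≤ r(a) s(c)`. Cauchy–Schwarz then gives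
`N² ≤ |T| · ∑_{(a,c) ∈ T} d(a, c)² ≤ |T| · ∑_{a, c} r(a) s(c) = |T| · |R| · |S|`.
-/

open Finset

namespace Finset

lemma sum_card_filter_eq_le {ι κ : Type*} [DecidableEq κ] (s : Finset ι) (t : Finset κ)
    (g : ι → κ) : ∑ y ∈ t, #{x ∈ s | g x = y} ≤ #s := by
  simpa only [card_eq_sum_ones] using
    sum_fiberwise_le_sum_of_sum_fiber_nonneg (s := s) (t := t) (g := g) (f := fun _ => 1)
      fun _ _ => Nat.zero_le _

variable {A B C : Type*} [DecidableEq A] [DecidableEq C]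

lemma sum_card_filter_fst_mul_card_filter_snd_le (R : Finset (A × B)) (S : Finset (B × C))
    (T : Finset (A × C)) :
    ∑ t ∈ T, #{p ∈ R | p.1 = t.1} * #{q ∈ S | q.2 = t.2} ≤ #R * #S :=
  calc ∑ t ∈ T, #{p ∈ R | p.1 = t.1} * #{q ∈ S | q.2 = t.2}
      ≤ ∑ t ∈ T.image Prod.fst ×ˢ T.image Prod.snd,
          #{p ∈ R | p.1 = t.1} * #{q ∈ S | q.2 = t.2} :=
        sum_le_sum_of_subset subset_product
    _ = (∑ a ∈ T.image Prod.fst, #{p ∈ R | p.1 = a}) *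
          ∑ c ∈ T.image Prod.snd, #{q ∈ S | q.2 = c} := by
        rw [sum_product, sum_mul_sum]
    _ ≤ #R * #S :=
        Nat.mul_le_mul (sum_card_filter_eq_le R _ _) (sum_card_filter_eq_le S _ _)

variable [DecidableEq B]

def triangles (R : Finset (A × B)) (S : Finset (B × C)) (T : Finset (A × C)) :
    Finset (A × B × C) :=
  {p ∈ R ×ˢ S | p.1.2 = p.2.1 ∧ (p.1.1, p.2.2) ∈ T}.image
    fun p => (p.1.1, p.1.2, p.2.2)

variable {R : Finset (A × B)} {S : Finset (B × C)} {T : Finset (A × C)}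

@[simp]
lemma mem_triangles {x : A × B × C} : x ∈ triangles R S T ↔
    (x.1, x.2.1) ∈ R ∧ (x.2.1, x.2.2) ∈ S ∧ (x.1, x.2.2) ∈ T := by
  constructor
  · simp only [triangles, mem_image, mem_filter, mem_product]
    rintro ⟨⟨⟨a, b⟩, ⟨b', c⟩⟩, ⟨⟨hR, hS⟩, hb, hT⟩, rfl⟩
    obtain rfl : b = b' := hb
    exact ⟨hR, hS, hT⟩
  · rintro ⟨hR, hS, hT⟩
    exact mem_image.2 ⟨((x.1, x.2.1), (x.2.1, x.2.2)), mem_filter.2 ⟨mem_product.2 ⟨hR, hS⟩,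
      rfl, hT⟩, rfl⟩

lemma card_triangles_fiber_le_left (t : A × C) :
    #{x ∈ triangles R S T | (x.1, x.2.2) = t} ≤ #{p ∈ R | p.1 = t.1} := by
  refine card_le_card_of_injOn (fun x => (x.1, x.2.1)) (fun x hx => ?_) fun x hx y hy hxy => ?_
  · simp only [coe_filter, Set.mem_ofPred_eq, mem_triangles] at hx ⊢
    exact ⟨hx.1.1, congrArg Prod.fst hx.2⟩
  · simp only [coe_filter, Set.mem_ofPred_eq] at hx hy
    have := hx.2.trans hy.2.symm
    simp only [Prod.mk.injEq] at this hxy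
    ext <;> simp_all

lemma card_triangles_fiber_le_right (t : A × C) :
    #{x ∈ triangles R S T | (x.1, x.2.2) = t} ≤ #{q ∈ S | q.2 = t.2} := by
  refine card_le_card_of_injOn (fun x => (x.2.1, x.2.2)) (fun x hx => ?_) fun x hx y hy hxy => ?_
  · simp only [coe_filter, Set.mem_ofPred_eq, mem_triangles] at hx ⊢
    exact ⟨hx.1.2.1, congrArg Prod.snd hx.2⟩
  · simp only [coe_filter, Set.mem_ofPred_eq] at hx hy
    have := hx.2.trans hy.2.symm
    simp only [Prod.mk.injEq] at this hxy
    ext <;> simp_all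

lemma card_triangles_sq_le : #(triangles R S T) ^ 2 ≤ #T * (#R * #S) :=
  calc #(triangles R S T) ^ 2
      = (∑ t ∈ T, #{x ∈ triangles R S T | (x.1, x.2.2) = t}) ^ 2 := by
        rw [← card_eq_sum_card_fiberwise fun x hx => (mem_triangles.1 hx).2.2]
    _ ≤ #T * ∑ t ∈ T, #{x ∈ triangles R S T | (x.1, x.2.2) = t} ^ 2 :=
        sq_sum_le_card_mul_sum_sq
    _ ≤ #T * ∑ t ∈ T, #{p ∈ R | p.1 = t.1} * #{q ∈ S | q.2 = t.2} := by
        gcongr with t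
        rw [sq]
        exact Nat.mul_le_mul (card_triangles_fiber_le_left t) (card_triangles_fiber_le_right t)
    _ ≤ #T * (#R * #S) := by
        gcongr; exact sum_card_filter_fst_mul_card_filter_snd_le R S T

end Finset

/-- For finite relations `R ⊆ A × B`, `S ⊆ B × C`, `T ⊆ A × C`, the number
of triples `(a, b, c)` with `(a, b) ∈ R`, `(b, c) ∈ S`, `(a, c) ∈ T` is at most
`(|R| · |S| · |T|) ^ (1/2)`. -/
theorem stmt5 {A B C : Type*} (R : Set (A × B)) (S : Set (B × C)) (T : Set (A × C))
    (hR : R.Finite) (hS : S.Finite) (hT : T.Finite) :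
    (({x : A × B × C | (x.1, x.2.1) ∈ R ∧ (x.2.1, x.2.2) ∈ S ∧ (x.1, x.2.2) ∈ T}).ncard : ℝ)
      ≤ ((R.ncard : ℝ) * (S.ncard : ℝ) * (T.ncard : ℝ)) ^ ((1 : ℝ) / 2) := by
  classical
  have hW : {x : A × B × C | (x.1, x.2.1) ∈ R ∧ (x.2.1, x.2.2) ∈ S ∧ (x.1, x.2.2) ∈ T} =
      ↑(triangles hR.toFinset hS.toFinset hT.toFinset) := by
    ext; simp
  have key := card_triangles_sq_le (R := hR.toFinset) (S := hS.toFinset) (T := hT.toFinset)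
  rw [hW, Set.ncard_coe_finset, R.ncard_eq_toFinset_card hR, S.ncard_eq_toFinset_card hS,
    T.ncard_eq_toFinset_card hT, ← Real.sqrt_eq_rpow,
    Real.le_sqrt (by positivity) (by positivity)]
  exact_mod_cast key.trans_eq (by ring)
end

section
/- Let A, B, C, D be sets and let R₁ ⊆ A × B, R₂ ⊆ B × C, R₃ ⊆ C × D, R₄ ⊆ D × A be finite relations. Then the number of quadruples (a, b, c, d) with (a, b) ∈ R₁, (b, c) ∈ R₂, (c, d) ∈ R₃, and (d, a) ∈ R₄ is at most (|R₁| · |R₂| · |R₃| · |R₄|)^{1/2}. -/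
lemma ncard_sprod_aux {α β : Type*} (s : Set α) (t : Set β) :
    (s ×ˢ t).ncard = s.ncard * t.ncard := by
  rw [← Nat.card_coe_set_eq, ← Nat.card_coe_set_eq, ← Nat.card_coe_set_eq,
    ← Nat.card_prod]
  exact Nat.card_congr (Equiv.Set.prod s t)

/-- For finite relations `R₁ ⊆ A × B`, `R₂ ⊆ B × C`, `R₃ ⊆ C × D`,
`R₄ ⊆ D × A`, the number of quadruples `(a, b, c, d)` with `(a, b) ∈ R₁`, `(b, c) ∈ R₂`,
`(c, d) ∈ R₃`, `(d, a) ∈ R₄` is at most `(|R₁| · |R₂| · |R₃| · |R₄|) ^ (1/2)`. -/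
theorem stmt6 {A B C D : Type*}
    (R₁ : Set (A × B)) (R₂ : Set (B × C)) (R₃ : Set (C × D)) (R₄ : Set (D × A))
    (h₁ : R₁.Finite) (h₂ : R₂.Finite) (h₃ : R₃.Finite) (h₄ : R₄.Finite) :
    (({x : A × B × C × D | (x.1, x.2.1) ∈ R₁ ∧ (x.2.1, x.2.2.1) ∈ R₂ ∧
        (x.2.2.1, x.2.2.2) ∈ R₃ ∧ (x.2.2.2, x.1) ∈ R₄}).ncard : ℝ)
      ≤ ((R₁.ncard : ℝ) * (R₂.ncard : ℝ) * (R₃.ncard : ℝ) * (R₄.ncard : ℝ)) ^ ((1 : ℝ) / 2) := by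
  set S : Set (A × B × C × D) := {x : A × B × C × D | (x.1, x.2.1) ∈ R₁ ∧
    (x.2.1, x.2.2.1) ∈ R₂ ∧ (x.2.2.1, x.2.2.2) ∈ R₃ ∧ (x.2.2.2, x.1) ∈ R₄} with hS
  -- S is finite
  have hSfin : S.Finite := by
    have : (fun x : A × B × C × D => ((x.1, x.2.1), (x.2.2.1, x.2.2.2))) '' S ⊆ R₁ ×ˢ R₃ := by
      rintro _ ⟨x, hx, rfl⟩
      exact ⟨hx.1, hx.2.2.1⟩
    refine Set.Finite.of_finite_image ((h₁.prod h₃).subset this) ?_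
    rintro ⟨a, b, c, d⟩ _ ⟨a', b', c', d'⟩ _ h
    simp only [Prod.mk.injEq] at h
    simp [h.1.1, h.1.2, h.2.1, h.2.2]
  -- key counting bound: |S|² ≤ |R₁||R₂||R₃||R₄|
  have key : S.ncard * S.ncard ≤ R₁.ncard * R₂.ncard * R₃.ncard * R₄.ncard := by
    have hle : (S ×ˢ S).ncard ≤ (R₁ ×ˢ (R₂ ×ˢ (R₃ ×ˢ R₄))).ncard := by
      refine Set.ncard_le_ncard_of_injOn
        (fun p => ((p.1.1, p.1.2.1), ((p.2.2.1, p.2.2.2.1), ((p.1.2.2.1, p.1.2.2.2),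
          (p.2.2.2.2, p.2.1))))) ?_ ?_ (h₁.prod (h₂.prod (h₃.prod h₄)))
      · rintro ⟨x, y⟩ ⟨hx, hy⟩
        exact ⟨hx.1, hy.2.1, hx.2.2.1, hy.2.2.2⟩
      · rintro ⟨⟨a, b, c, d⟩, ⟨a', b', c', d'⟩⟩ _ ⟨⟨e, f, g, h⟩, ⟨e', f', g', h'⟩⟩ _ heq
        simp only [Prod.mk.injEq] at heq
        obtain ⟨⟨h1, h2⟩, ⟨h3, h4⟩, ⟨h5, h6⟩, h7, h8⟩ := heq
        simp_all
    calc S.ncard * S.ncard = (S ×ˢ S).ncard := (ncard_sprod_aux S S).symm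
      _ ≤ (R₁ ×ˢ (R₂ ×ˢ (R₃ ×ˢ R₄))).ncard := hle
      _ = R₁.ncard * R₂.ncard * R₃.ncard * R₄.ncard := by
          rw [ncard_sprod_aux, ncard_sprod_aux, ncard_sprod_aux]; ring
  rw [← Real.sqrt_eq_rpow]
  rw [Real.le_sqrt (by positivity)]
  have := (Nat.cast_le (α := ℝ)).2 key
  push_cast at this ⊢
  nlinarith [this]
  positivity
end

section
/- Let k ≥ 1, let V be a set, let R₁, …, R_k ⊆ V × V be finite relations with |R_i| ≤ N for every i. Then the number of tuples (a₁, …, a_{k+1}) ∈ V^{k+1} such that (a_i, a_{i+1}) ∈ R_i for every 1 ≤ i ≤ k is at most N^{⌈(k+1)/2⌉}. -/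
/-!
A path is determined by its edges, and even by its first `k + 1` vertices together with its
last edge, because that edge carries the last two vertices. Deleting the last two edges thus
costs one factor `N`, which gives the bound `N ^ ⌈(k + 1) / 2⌉` by induction on `k` in steps
of two, starting from the trivial bounds `N` and `N ^ 2` for one and two edges.
-/

def pathSet {V : Type*} {k : ℕ} (R : Fin k → Set (V × V)) : Set (Fin (k + 1) → V) :=
  {a | ∀ i : Fin k, (a i.castSucc, a i.succ) ∈ R i}

namespace pathSet

variable {V : Type*} {k : ℕ}

def edges (R : Fin k → Set (V × V)) (a : pathSet R) (i : Fin k) : R i :=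
  ⟨(a.1 i.castSucc, a.1 i.succ), a.2 i⟩

lemma edges_injective (R : Fin (k + 1) → Set (V × V)) : Function.Injective (edges R) := by
  rintro ⟨a, ha⟩ ⟨b, hb⟩ h
  ext j : 2
  induction j using Fin.lastCases with
  | last => simpa [edges] using congrArg (fun e => (e (Fin.last k)).1.2) h
  | cast j => exact congrArg (fun e => (e j).1.1) h

lemma init_mem {R : Fin (k + 1) → Set (V × V)} {a : Fin (k + 2) → V} (ha : a ∈ pathSet R) :
    Fin.init a ∈ pathSet (Fin.init R) := fun i => by
  simpa only [Fin.init, ← Fin.succ_castSucc] using ha i.castSucc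

def dropLastTwo (R : Fin (k + 2) → Set (V × V)) (a : pathSet R) :
    pathSet (Fin.init (Fin.init R)) × R (Fin.last _) :=
  (⟨Fin.init (Fin.init a.1), init_mem (init_mem a.2)⟩, edges R a (Fin.last _))

lemma dropLastTwo_injective (R : Fin (k + 2) → Set (V × V)) :
    Function.Injective (dropLastTwo R) := by
  rintro ⟨a, ha⟩ ⟨b, hb⟩ h
  simp only [dropLastTwo, edges, Prod.mk.injEq, Subtype.mk.injEq] at h
  obtain ⟨hinit, hlast, hlast'⟩ := h
  ext j : 2
  induction j using Fin.lastCases with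
  | last => simpa using hlast'
  | cast j =>
    induction j using Fin.lastCases with
    | last => exact hlast
    | cast j => exact congrFun hinit j

lemma finite (R : Fin (k + 1) → Set (V × V)) (hfin : ∀ i, (R i).Finite) :
    (pathSet R).Finite := by
  have := fun i => (hfin i).to_subtype
  exact Set.finite_coe_iff.mp (Finite.of_injective _ (edges_injective R))

lemma card_le_pow {N : ℕ} (R : Fin (k + 1) → Set (V × V)) (hfin : ∀ i, (R i).Finite)
    (hN : ∀ i, (R i).ncard ≤ N) : Nat.card (pathSet R) ≤ N ^ (k + 1) := by
  have := fun i => (hfin i).to_subtype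
  calc Nat.card (pathSet R) ≤ Nat.card (∀ i, R i) :=
        Nat.card_le_card_of_injective _ (edges_injective R)
    _ = ∏ i, (R i).ncard := by simp only [Nat.card_pi, Nat.card_coe_set_eq]
    _ ≤ N ^ (k + 1) := by
      simpa using Finset.prod_le_pow_card Finset.univ _ N fun i _ => hN i

lemma card_le_card_dropLastTwo_mul (R : Fin (k + 3) → Set (V × V))
    (hfin : ∀ i, (R i).Finite) :
    Nat.card (pathSet R) ≤
      Nat.card (pathSet (Fin.init (Fin.init R))) * (R (Fin.last _)).ncard := by
  have := (finite (Fin.init (Fin.init R)) fun i => hfin _).to_subtype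
  have := (hfin (Fin.last _)).to_subtype
  calc Nat.card (pathSet R) ≤ Nat.card (pathSet (Fin.init (Fin.init R)) × R (Fin.last _)) :=
        Nat.card_le_card_of_injective _ (dropLastTwo_injective R)
    _ = _ := by rw [Nat.card_prod, Nat.card_coe_set_eq (R _)]

theorem card_le_pow_div_two {N : ℕ} (k : ℕ) (R : Fin (k + 1) → Set (V × V))
    (hfin : ∀ i, (R i).Finite) (hN : ∀ i, (R i).ncard ≤ N) :
    Nat.card (pathSet R) ≤ N ^ ((k + 3) / 2) := by
  induction k using Nat.twoStepInduction with
  | zero => exact card_le_pow R hfin hN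
  | one => exact card_le_pow R hfin hN
  | more k ih _ =>
    calc Nat.card (pathSet R)
        ≤ Nat.card (pathSet (Fin.init (Fin.init R))) * (R (Fin.last _)).ncard :=
          card_le_card_dropLastTwo_mul R hfin
      _ ≤ N ^ ((k + 3) / 2) * N :=
          Nat.mul_le_mul (ih _ (fun i => hfin _) fun i => hN _) (hN _)
      _ = N ^ ((k + 2 + 3) / 2) := by rw [← pow_succ]; congr 1; omega

end pathSet

/-- Let `k ≥ 1` and let `R₁, …, R_k ⊆ V × V` be finite relations with
`|R_i| ≤ N` for every `i`.  Then the number of `k`-paths, i.e. tuples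
`(a₁, …, a_{k+1}) ∈ V^{k+1}` with `(a_i, a_{i+1}) ∈ R_i` for every `i`, is at most
`N ^ ⌈(k+1)/2⌉` (note `⌈(k+1)/2⌉ = (k+2)/2` with natural division). -/
theorem stmt7 {V : Type*} (k : ℕ) (hk : 1 ≤ k) (R : Fin k → Set (V × V))
    (hfin : ∀ i, (R i).Finite) (N : ℕ) (hN : ∀ i, (R i).ncard ≤ N) :
    ({a : Fin (k + 1) → V | ∀ i : Fin k, (a i.castSucc, a i.succ) ∈ R i}).ncard
      ≤ N ^ ((k + 2) / 2) := by
  obtain ⟨k, rfl⟩ := Nat.exists_eq_add_of_le' hk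
  rw [← Nat.card_coe_set_eq]
  exact pathSet.card_le_pow_div_two k R hfin hN
end

section
/- Let A, B, C be sets, let R ⊆ A × B and S ⊆ B × C be finite relations, and let Δ > 0 be a real number. Let H = {c ∈ C : |{b ∈ B : (b, c) ∈ S}| > Δ}. Then the number of pairs (a, c) ∈ A × C such that c ∈ H and there exists b ∈ B with (a, b) ∈ R and (b, c) ∈ S is at most |R| · |S| / Δ. -/
/-!
Every heavy column `c` carries more than `Δ` pairs of `S`, and distinct columns carry disjoint
pairs, so there are at most `|S| / Δ` heavy columns (Markov's inequality). A pair `(a, c)` that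
is counted has `a` in the domain of `R` and `c` heavy, so there are at most `|R| · |S| / Δ` of
them.
-/

namespace Set

variable {A B C : Type*}

def heavySet (S : Set (B × C)) (Δ : ℝ) : Set C :=
  {c | Δ < ({b | (b, c) ∈ S}.ncard : ℝ)}

lemma heavySet_subset_image_snd (S : Set (B × C)) {Δ : ℝ} (hΔ : 0 ≤ Δ) :
    heavySet S Δ ⊆ Prod.snd '' S := by
  intro c hc
  have hdeg : {b | (b, c) ∈ S}.ncard ≠ 0 := by
    have : (0 : ℝ) < {b | (b, c) ∈ S}.ncard := hΔ.trans_lt hc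
    exact_mod_cast this.ne'
  obtain ⟨b, hb⟩ := nonempty_of_ncard_ne_zero hdeg
  exact ⟨(b, c), hb, rfl⟩

lemma Finite.heavySet {S : Set (B × C)} (hS : S.Finite) {Δ : ℝ} (hΔ : 0 ≤ Δ) :
    (heavySet S Δ).Finite :=
  (hS.image Prod.snd).subset (heavySet_subset_image_snd S hΔ)

lemma ncard_heavySet_mul_le {S : Set (B × C)} (hS : S.Finite) {Δ : ℝ} (hΔ : 0 ≤ Δ) :
    (heavySet S Δ).ncard * Δ ≤ S.ncard := by
  set H := heavySet S Δ
  have hH : H.Finite := hS.heavySet hΔ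
  let column : C → Set (B × C) := fun c => (·, c) '' {b | (b, c) ∈ S}
  have hcolumn_ncard (c : C) : (column c).ncard = {b | (b, c) ∈ S}.ncard :=
    ncard_image_of_injective _ (Prod.mk_left_injective c)
  have hcolumn_subset (c : C) : column c ⊆ S := by
    rintro _ ⟨b, hb, rfl⟩
    exact hb
  have hdisj : H.PairwiseDisjoint column := by
    intro c _ c' _ hne
    refine disjoint_left.2 ?_
    rintro _ ⟨b, -, rfl⟩ ⟨b', -, hbb'⟩
    exact hne (congrArg Prod.snd hbb').symm
  have hsum : ∑ c ∈ hH.toFinset, {b | (b, c) ∈ S}.ncard ≤ S.ncard := by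
    rw [← finsum_mem_eq_finite_toFinset_sum _ hH, ← finsum_mem_congr rfl fun c _ => hcolumn_ncard c,
      ← hH.ncard_biUnion (fun c _ => hS.subset (hcolumn_subset c)) hdisj]
    exact ncard_le_ncard (iUnion₂_subset fun c _ => hcolumn_subset c) hS
  calc (H.ncard : ℝ) * Δ = ∑ _c ∈ hH.toFinset, Δ := by
        rw [Finset.sum_const, nsmul_eq_mul, ncard_eq_toFinset_card H hH]
    _ ≤ ∑ c ∈ hH.toFinset, ({b | (b, c) ∈ S}.ncard : ℝ) :=
        Finset.sum_le_sum fun c hc => (hH.mem_toFinset.1 hc).le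
    _ ≤ S.ncard := by exact_mod_cast hsum

lemma ncard_le_ncard_mul_ncard_of_forall {R : Set (A × B)} {H : Set C} {T : Set (A × C)}
    (hR : R.Finite) (hH : H.Finite) (hT : ∀ p ∈ T, p.2 ∈ H ∧ ∃ b, (p.1, b) ∈ R) :
    T.ncard ≤ R.ncard * H.ncard :=
  calc T.ncard ≤ ((Prod.fst '' R) ×ˢ H).ncard := by
        refine ncard_le_ncard (fun p hp => ?_) ((hR.image _).prod hH)
        obtain ⟨hpH, b, hb⟩ := hT p hp
        exact ⟨⟨(p.1, b), hb, rfl⟩, hpH⟩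
    _ = (Prod.fst '' R).ncard * H.ncard := ncard_prod
    _ ≤ R.ncard * H.ncard := Nat.mul_le_mul_right _ (ncard_image_le hR)

end Set

/-- Let `R ⊆ A × B`, `S ⊆ B × C` be finite relations and `Δ > 0` a real.
Let `H = {c : deg_S(c) > Δ}` be the heavy elements of `C`.  Then the number of pairs
`(a, c)` with `c ∈ H` joined by some `b` via `R` and `S` is at most `|R| · |S| / Δ`. -/
theorem stmt11 {A B C : Type*} (R : Set (A × B)) (S : Set (B × C))
    (hR : R.Finite) (hS : S.Finite) (Δ : ℝ) (hΔ : 0 < Δ) :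
    (({p : A × C | Δ < (({b : B | (b, p.2) ∈ S}).ncard : ℝ) ∧
        ∃ b : B, (p.1, b) ∈ R ∧ (b, p.2) ∈ S}).ncard : ℝ)
      ≤ (R.ncard : ℝ) * (S.ncard : ℝ) / Δ := by
  rw [le_div_iff₀ hΔ]
  calc _ ≤ (R.ncard : ℝ) * (S.heavySet Δ).ncard * Δ := by
        gcongr
        refine mod_cast Set.ncard_le_ncard_mul_ncard_of_forall hR (hS.heavySet hΔ.le) ?_
        exact fun p hp => ⟨hp.1, hp.2.imp fun _ hb => hb.1⟩
    _ ≤ R.ncard * S.ncard := by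
        rw [mul_assoc]
        gcongr
        exact Set.ncard_heavySet_mul_le hS hΔ.le
end

section
/- Let A, B, C be sets, let S ⊆ A × B and T ⊆ B × C be finite relations, let Δ ≥ 0 be a real number, and let L ⊆ B be a set such that every b ∈ L satisfies |{a ∈ A : (a, b) ∈ S}| ≤ Δ or |{c ∈ C : (b, c) ∈ T}| ≤ Δ. Then the number of pairs (a, c) ∈ A × C such that there exists b ∈ L with (a, b) ∈ S and (b, c) ∈ T is at most (|S| + |T|) · Δ. -/
/-!
Split `L` into the points of small `S`-degree and those of small `T`-degree. A pair `(a, c)`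
joined through a point `b` of the first kind lies in `{a | (a, b) ∈ S} × {c}` for the edge
`(b, c) ∈ T`, a set of at most `Δ` elements; so these pairs number at most `|T| Δ`. Swapping
the roles of `S` and `T` bounds the pairs joined through the second kind by `|S| Δ`.
-/

namespace Set

variable {A B C : Type*}

def compThrough (S : Set (A × B)) (M : Set B) (T : Set (B × C)) : Set (A × C) :=
  {p | ∃ b ∈ M, (p.1, b) ∈ S ∧ (b, p.2) ∈ T}

variable {S : Set (A × B)} {T : Set (B × C)} {M N : Set B}

theorem compThrough_union :
    compThrough S (M ∪ N) T = compThrough S M T ∪ compThrough S N T := by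
  ext p
  simp only [compThrough, mem_union, mem_ofPred_eq, or_and_right, exists_or]

theorem preimage_swap_compThrough :
    Prod.swap ⁻¹' compThrough S M T = compThrough (Prod.swap ⁻¹' T) M (Prod.swap ⁻¹' S) := by
  ext p
  simp only [compThrough, mem_preimage, mem_ofPred_eq, Prod.fst_swap, Prod.snd_swap,
    Prod.swap_prod_mk, and_comm]

theorem ncard_preimage_swap (R : Set (A × B)) : (Prod.swap ⁻¹' R).ncard = R.ncard := by
  rw [← image_swap_eq_preimage_swap, ncard_image_of_injective _ Prod.swap_injective]

theorem compThrough_eq_biUnion (T : Set (B × C)) :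
    compThrough S M T = ⋃ q ∈ T, {a | q.1 ∈ M ∧ (a, q.1) ∈ S} ×ˢ {q.2} := by
  ext ⟨a, c⟩
  simp only [compThrough, mem_ofPred_eq, mem_iUnion, mem_prod, mem_singleton_iff, exists_prop,
    Prod.exists]
  constructor
  · rintro ⟨b, hb, hab, hbc⟩
    exact ⟨b, c, hbc, ⟨hb, hab⟩, rfl⟩
  · rintro ⟨b, _, hbc, ⟨hb, hab⟩, rfl⟩
    exact ⟨b, hb, hab, hbc⟩

theorem ncard_compThrough_le_of_ncard_fiber_left_le (hT : T.Finite) {Δ : ℝ}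
    (hΔ : 0 ≤ Δ) (hM : ∀ b ∈ M, ({a | (a, b) ∈ S}.ncard : ℝ) ≤ Δ) :
    ((compThrough S M T).ncard : ℝ) ≤ T.ncard * Δ := by
  have hpiece : ∀ q : B × C, (({a | q.1 ∈ M ∧ (a, q.1) ∈ S} ×ˢ {q.2}).ncard : ℝ) ≤ Δ := by
    intro q
    rw [ncard_prod, ncard_singleton, mul_one]
    by_cases hq : q.1 ∈ M
    · simpa only [hq, true_and] using hM q.1 hq
    · simpa only [hq, false_and, ofPred_false, ncard_empty, Nat.cast_zero] using hΔ
  obtain ⟨t, rfl⟩ := hT.exists_finset_coe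
  calc ((compThrough S M (t : Set (B × C))).ncard : ℝ)
      ≤ ∑ q ∈ t, (({a | q.1 ∈ M ∧ (a, q.1) ∈ S} ×ˢ {q.2}).ncard : ℝ) := by
        rw [compThrough_eq_biUnion, ← Nat.cast_sum]
        exact Nat.cast_le.mpr (Finset.set_ncard_biUnion_le t _)
    _ ≤ ∑ _q ∈ t, Δ := Finset.sum_le_sum fun q _ => hpiece q
    _ = (t : Set (B × C)).ncard * Δ := by
        rw [Finset.sum_const, nsmul_eq_mul, ncard_coe_finset]

theorem ncard_compThrough_le_of_ncard_fiber_right_le (hS : S.Finite) {Δ : ℝ} (hΔ : 0 ≤ Δ)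
    (hM : ∀ b ∈ M, ({c | (b, c) ∈ T}.ncard : ℝ) ≤ Δ) :
    ((compThrough S M T).ncard : ℝ) ≤ S.ncard * Δ := by
  rw [← ncard_preimage_swap (compThrough S M T), preimage_swap_compThrough,
    ← ncard_preimage_swap S]
  exact ncard_compThrough_le_of_ncard_fiber_left_le (hS.preimage Prod.swap_injective.injOn) hΔ hM

end Set

/-- Let `S ⊆ A × B`, `T ⊆ B × C` be finite relations, `Δ ≥ 0` a real, and
`L ⊆ B` a set all of whose elements are light: each `b ∈ L` has degree at most `Δ` in `S`
or degree at most `Δ` in `T`.  Then the number of pairs `(a, c)` joined via some `b ∈ L`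
is at most `(|S| + |T|) · Δ`. -/
theorem stmt12 {A B C : Type*} (S : Set (A × B)) (T : Set (B × C))
    (hS : S.Finite) (hT : T.Finite) (Δ : ℝ) (hΔ : 0 ≤ Δ) (L : Set B)
    (hL : ∀ b ∈ L, (({a : A | (a, b) ∈ S}).ncard : ℝ) ≤ Δ ∨
        (({c : C | (b, c) ∈ T}).ncard : ℝ) ≤ Δ) :
    (({p : A × C | ∃ b ∈ L, (p.1, b) ∈ S ∧ (b, p.2) ∈ T}).ncard : ℝ)
      ≤ ((S.ncard : ℝ) + (T.ncard : ℝ)) * Δ := by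
  set M : Set B := {b ∈ L | ({a : A | (a, b) ∈ S}.ncard : ℝ) ≤ Δ}
  set N : Set B := {b ∈ L | ({c : C | (b, c) ∈ T}.ncard : ℝ) ≤ Δ}
  have hL_eq : L = M ∪ N := by
    ext b
    simp only [M, N, Set.mem_union, Set.mem_sep_iff, ← and_or_left, iff_self_and]
    exact hL b
  change ((Set.compThrough S L T).ncard : ℝ) ≤ _
  rw [hL_eq, Set.compThrough_union]
  calc (((Set.compThrough S M T ∪ Set.compThrough S N T).ncard : ℕ) : ℝ)
      ≤ (Set.compThrough S M T).ncard + (Set.compThrough S N T).ncard := by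
        exact_mod_cast Set.ncard_union_le _ _
    _ ≤ T.ncard * Δ + S.ncard * Δ := by
        gcongr
        · exact Set.ncard_compThrough_le_of_ncard_fiber_left_le hT hΔ fun b hb => hb.2
        · exact Set.ncard_compThrough_le_of_ncard_fiber_right_le hS hΔ fun b hb => hb.2
    _ = (S.ncard + T.ncard) * Δ := by ring
end

section
/- Let m ≥ 1, let X and Y₁, …, Y_m be sets, let R_j ⊆ X × Y_j be finite relations, and let T > 0 be a real number. For b ∈ Y_j let deg_{R_j}(b) = |{x ∈ X : (x, b) ∈ R_j}|. Then the number of tuples (b₁, …, b_m) ∈ Y₁ × ⋯ × Y_m such that deg_{R_j}(b_j) > T for every j and there exists x ∈ X with (x, b_j) ∈ R_j for every j, is at most (∏_{j=1}^{m} |R_j|) / T^{m-1}. -/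
/-!
Fix an index `i₀`. For a good tuple `b`, pick a common neighbour `x₀` of all the `b j` and, for
each `j ≠ i₀`, an arbitrary neighbour `x_j` of `b j`; setting `x_{i₀} = x₀`, the tuple of pairs
`(x_j, b_j)` lies in `∏ R_j` and determines `b` together with all the `x_j`. Each good `b` has
at least `T^(m-1)` such extensions, so `|S| T^(m-1) ≤ ∏ |R_j|`.
-/

open Finset

section DoubleCounting

variable {X ι : Type*} {α : ι → Type*} {R : (i : ι) → Set (X × α i)}

theorem Set.Finite.fiber {Y : Type*} {R : Set (X × Y)} (hR : R.Finite) (y : Y) :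
    {x | (x, y) ∈ R}.Finite :=
  hR.preimage (Prod.mk_left_injective y).injOn

theorem Set.Finite.commonFiber {i₀ : ι} (hR : (R i₀).Finite) (b : (i : ι) → α i) :
    {x | ∀ i, (x, b i) ∈ R i}.Finite :=
  (hR.fiber (b i₀)).subset fun _ hx => hx i₀

theorem sum_ncard_common_mul_prod_ncard_fiber_le [Fintype ι] [DecidableEq ι]
    (hR : ∀ i, (R i).Finite) (S : Finset ((i : ι) → α i)) (i₀ : ι) :
    ∑ b ∈ S, {x | ∀ i, (x, b i) ∈ R i}.ncard * ∏ i ∈ univ.erase i₀, {x | (x, b i) ∈ R i}.ncard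
      ≤ ∏ i, (R i).ncard := by
  have hcommon (b : (i : ι) → α i) := (hR i₀).commonFiber b
  let extensions (b : (i : ι) → α i) : Finset (ι → X) :=
    Fintype.piFinset <| Function.update (fun i => ((hR i).fiber (b i)).toFinset) i₀
      (hcommon b).toFinset
  let D := S.sigma extensions
  calc _ = #D := by
        rw [card_sigma]
        refine sum_congr rfl fun b _ => ?_
        rw [Fintype.card_piFinset, ← mul_prod_erase univ _ (mem_univ i₀), Function.update_self,
          Set.ncard_eq_toFinset_card _ (hcommon b)]
        refine congrArg _ (prod_congr rfl fun i hi => ?_)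
        rw [Function.update_of_ne (ne_of_mem_erase hi),
          Set.ncard_eq_toFinset_card _ ((hR i).fiber _)]
    _ ≤ #(Fintype.piFinset fun i => (hR i).toFinset) := by
        refine card_le_card_of_injOn (fun p i => (p.2 i, p.1 i)) ?_ ?_
        · rintro ⟨b, x⟩ hp
          simp only [D, extensions, coe_sigma, Set.mem_sigma_iff, mem_coe,
            Fintype.mem_piFinset] at hp ⊢
          intro i
          have hx := hp.2 i
          rw [Function.update_apply] at hx
          split_ifs at hx with hi
          · subst hi
            simpa using (Set.Finite.mem_toFinset _).mp hx i
          · simpa using hx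
        · rintro ⟨b, x⟩ - ⟨b', x'⟩ - h
          have hb : b = b' := funext fun i => congrArg Prod.snd (congrFun h i)
          have hx : x = x' := funext fun i => congrArg Prod.fst (congrFun h i)
          subst hb hx
          rfl
    _ = ∏ i, (R i).ncard := by
        simp only [Fintype.card_piFinset, Set.ncard_eq_toFinset_card _ (hR _)]

theorem Set.Finite.of_forall_commonFiber_nonempty [Finite ι] (hR : ∀ i, (R i).Finite)
    {S : Set ((i : ι) → α i)} (hS : ∀ b ∈ S, ∃ x, ∀ i, (x, b i) ∈ R i) : S.Finite :=
  (Set.Finite.pi fun i => (hR i).image Prod.snd).subset fun b hb i _ =>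
    let ⟨x, hx⟩ := hS b hb
    ⟨(x, b i), hx i, rfl⟩

theorem ncard_mul_pow_le_prod_ncard [Fintype ι] (hR : ∀ i, (R i).Finite) (i₀ : ι) {T : ℝ}
    (hT : 0 ≤ T) {S : Set ((i : ι) → α i)}
    (hS : ∀ b ∈ S, (∀ i, T ≤ {x | (x, b i) ∈ R i}.ncard) ∧ ∃ x, ∀ i, (x, b i) ∈ R i) :
    S.ncard * T ^ (Fintype.card ι - 1) ≤ ∏ i, ((R i).ncard : ℝ) := by
  classical
  have hSfin := Set.Finite.of_forall_commonFiber_nonempty hR fun b hb => (hS b hb).2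
  have hbound : ∀ b ∈ hSfin.toFinset, T ^ (Fintype.card ι - 1) ≤
      {x | ∀ i, (x, b i) ∈ R i}.ncard *
        ∏ i ∈ univ.erase i₀, ({x | (x, b i) ∈ R i}.ncard : ℝ) := by
    intro b hb
    obtain ⟨hdeg, x, hx⟩ := hS b (hSfin.mem_toFinset.mp hb)
    have hcommon : (1 : ℝ) ≤ {x | ∀ i, (x, b i) ∈ R i}.ncard := by
      exact_mod_cast (Set.ncard_pos ((hR i₀).commonFiber b)).mpr ⟨x, hx⟩
    calc T ^ (Fintype.card ι - 1) = ∏ _i ∈ univ.erase i₀, T := by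
          rw [prod_const, card_erase_of_mem (mem_univ i₀), card_univ]
      _ ≤ ∏ i ∈ univ.erase i₀, ({x | (x, b i) ∈ R i}.ncard : ℝ) :=
          prod_le_prod (fun _ _ => hT) fun i _ => hdeg i
      _ ≤ _ := le_mul_of_one_le_left (by positivity) hcommon
  calc S.ncard * T ^ (Fintype.card ι - 1)
        = ∑ _b ∈ hSfin.toFinset, T ^ (Fintype.card ι - 1) := by
        rw [sum_const, nsmul_eq_mul, Set.ncard_eq_toFinset_card _ hSfin]
    _ ≤ _ := sum_le_sum hbound
    _ ≤ ∏ i, ((R i).ncard : ℝ) := by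
        exact_mod_cast sum_ncard_common_mul_prod_ncard_fiber_le hR hSfin.toFinset i₀

end DoubleCounting

/-- Let `m ≥ 1`, let `R_j ⊆ X × Y_j` be finite relations, and `T > 0` a
real.  Then the number of tuples `(b₁, …, b_m)` such that every `b_j` has degree greater
than `T` in `R_j` and some `x ∈ X` satisfies `(x, b_j) ∈ R_j` for every `j`, is at most
`(∏_j |R_j|) / T^(m-1)`. -/
theorem stmt15 {X : Type*} (m : ℕ) (hm : 1 ≤ m) (Y : Fin m → Type*)
    (R : (j : Fin m) → Set (X × Y j)) (hfin : ∀ j, (R j).Finite)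
    (T : ℝ) (hT : 0 < T) :
    (({b : (j : Fin m) → Y j |
        (∀ j, T < (({x : X | (x, b j) ∈ R j}).ncard : ℝ)) ∧
        ∃ x : X, ∀ j, (x, b j) ∈ R j}).ncard : ℝ)
      ≤ (∏ j, ((R j).ncard : ℝ)) / T ^ (m - 1) := by
  rw [le_div_iff₀ (by positivity)]
  simpa using ncard_mul_pow_le_prod_ncard hfin ⟨0, hm⟩ hT.le fun b hb =>
    ⟨fun j => (hb.1 j).le, hb.2⟩
end
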